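/- arXiv:1807.07483 — 8 statements merged into one kernel-verified Lean document; each statement's English description precedes it below -/
import Mathlib

section
/- Let n ≥ 2 and define φ : (0,∞)^{n-1} → ℝ by φ(y) = Σ_{S ⊆ [n-1]} (1/(|S|+1)) · Π_{j ∈ S} (e^{y_j} - 1), where the sum is over all subsets S of {1,...,n-1}. Then φ is Schur-convex, i.e., for all y in the domain, (y₁ - y₂)·(∂φ/∂y₁(y) - ∂φ/∂y₂(y)) ≥ 0. -/
/-!
Put `x j = exp (y j) - 1 ≥ 0`, so that `φ = ∑_S c |S| ∏_{j ∈ S} x j` with the antitone weights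
`c k = 1 / (k + 1)`. Differentiating in `y i` gives `∂ᵢφ = exp (y i) · Qᵢ`, where `Qᵢ` is the
analogous sum over subsets avoiding `i`, with weights `c (k + 1)`. Splitting `Q₁` and `Q₂` by
whether a subset contains the other index, and using `exp (y i) = x i + 1`, gives
`∂₁φ - ∂₂φ = (exp y₁ - exp y₂) · R`, where `R` is a sum of products of the `x j` with weights
`c (k + 1) - c (k + 2) ≥ 0`. So `R ≥ 0`, and `(y₁ - y₂) (exp y₁ - exp y₂) ≥ 0` as `exp` is monotone.
-/

open Finset Real

variable {ι : Type*}

/-- `∑ₖ c k • eₖ(x|ₛ)`, a linear combination of the elementary symmetric polynomials. -/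
noncomputable def esymmComb (c : ℕ → ℝ) (s : Finset ι) (x : ι → ℝ) : ℝ :=
  ∑ S ∈ s.powerset, c S.card * ∏ j ∈ S, x j

theorem esymmComb_congr (c : ℕ → ℝ) (s : Finset ι) {x x' : ι → ℝ} (h : ∀ j ∈ s, x j = x' j) :
    esymmComb c s x = esymmComb c s x' :=
  sum_congr rfl fun S hS => by rw [prod_congr rfl fun j hj => h j (mem_powerset.mp hS hj)]

theorem esymmComb_sub (c d : ℕ → ℝ) (s : Finset ι) (x : ι → ℝ) :
    esymmComb c s x - esymmComb d s x = esymmComb (fun k => c k - d k) s x := by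
  simp only [esymmComb, ← sum_sub_distrib, sub_mul]

theorem esymmComb_nonneg {c : ℕ → ℝ} (hc : ∀ k, 0 ≤ c k) (s : Finset ι) {x : ι → ℝ}
    (hx : ∀ j, 0 ≤ x j) : 0 ≤ esymmComb c s x :=
  sum_nonneg fun _ _ => mul_nonneg (hc _) (prod_nonneg fun j _ => hx j)

variable [DecidableEq ι]

theorem esymmComb_insert (c : ℕ → ℝ) {s : Finset ι} {i : ι} (hi : i ∉ s) (x : ι → ℝ) :
    esymmComb c (insert i s) x = esymmComb c s x + x i * esymmComb (fun k => c (k + 1)) s x := by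
  rw [esymmComb, sum_powerset_insert hi, esymmComb, esymmComb, mul_sum]
  congr 1
  refine sum_congr rfl fun T hT => ?_
  have hiT : i ∉ T := fun h => hi (mem_powerset.mp hT h)
  rw [card_insert_of_notMem hiT, prod_insert hiT]
  ring

theorem esymmComb_exchange (c : ℕ → ℝ) {s : Finset ι} {i j : ι} (hi : i ∉ s) (hj : j ∉ s)
    (x : ι → ℝ) :
    (x i + 1) * esymmComb c (insert j s) x - (x j + 1) * esymmComb c (insert i s) x =
      (x i - x j) * esymmComb (fun k => c k - c (k + 1)) s x := by
  rw [esymmComb_insert c hi, esymmComb_insert c hj, ← esymmComb_sub]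
  ring

theorem fderiv_esymmComb_exp_sub_one [Fintype ι] (c : ℕ → ℝ) (y : ι → ℝ) (i : ι) :
    fderiv ℝ (fun y : ι → ℝ => esymmComb c univ fun j => exp (y j) - 1) y (Pi.single i 1) =
      exp (y i) * esymmComb (fun k => c (k + 1)) (univ.erase i) fun j => exp (y j) - 1 := by
  have hdiff :
      DifferentiableAt ℝ (fun y : ι → ℝ => esymmComb c univ fun j => exp (y j) - 1) y := by
    unfold esymmComb; fun_prop
  set A := esymmComb c (univ.erase i) fun j => exp (y j) - 1
  set B := esymmComb (fun k => c (k + 1)) (univ.erase i) fun j => exp (y j) - 1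
  have hline :
      (fun t : ℝ => esymmComb c univ fun j => exp ((y + t • (Pi.single i 1 : ι → ℝ)) j) - 1) =
        fun t => A + (exp (y i + t) - 1) * B := by
    funext t
    have hoff : ∀ j ∈ univ.erase i,
        exp ((y + t • (Pi.single i 1 : ι → ℝ)) j) - 1 = exp (y j) - 1 := fun j hj => by
      simp [ne_of_mem_erase hj]
    rw [← insert_erase (mem_univ i), esymmComb_insert c (notMem_erase i _),
      esymmComb_congr _ _ hoff, esymmComb_congr _ _ hoff]
    simp [A, B]
  have hderiv : HasDerivAt (fun t => A + (exp (y i + t) - 1) * B) (exp (y i) * B) 0 := by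
    simpa using
      ((((hasDerivAt_id (0 : ℝ)).const_add (y i)).exp.sub_const 1).mul_const B).const_add A
  rw [← hdiff.lineDeriv_eq_fderiv, lineDeriv, hline, hderiv.deriv]

theorem sub_mul_fderiv_esymmComb_exp_sub_one_nonneg [Fintype ι] {c : ℕ → ℝ}
    (hc : Antitone c) {y : ι → ℝ} (hy : ∀ j, 0 ≤ y j) (i₁ i₂ : ι) :
    let φ := fun y : ι → ℝ => esymmComb c univ fun j => exp (y j) - 1
    0 ≤ (y i₁ - y i₂) * (fderiv ℝ φ y (Pi.single i₁ 1) - fderiv ℝ φ y (Pi.single i₂ 1)) := by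
  dsimp only
  obtain rfl | hne := eq_or_ne i₁ i₂
  · simp
  have hx : ∀ j, 0 ≤ exp (y j) - 1 := fun j => by simpa using hy j
  set s := (univ.erase i₁).erase i₂
  have h₁ : univ.erase i₁ = insert i₂ s :=
    (insert_erase (mem_erase.2 ⟨hne.symm, mem_univ _⟩)).symm
  have h₂ : univ.erase i₂ = insert i₁ s := by
    rw [show s = (univ.erase i₂).erase i₁ from erase_right_comm,
      insert_erase (mem_erase.2 ⟨hne, mem_univ _⟩)]
  have hexchange := esymmComb_exchange (fun k => c (k + 1)) (s := s) (i := i₁) (by simp [s])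
    (notMem_erase i₂ _) fun j => exp (y j) - 1
  simp only [sub_add_cancel] at hexchange
  rw [fderiv_esymmComb_exp_sub_one, fderiv_esymmComb_exp_sub_one, h₁, h₂, hexchange, ← mul_assoc]
  refine mul_nonneg ?_ (esymmComb_nonneg (fun k => sub_nonneg.2 (hc (k + 1).le_succ)) s hx)
  rw [sub_sub_sub_cancel_right]
  exact (monotone_id.monovary exp_monotone).sub_mul_sub_nonneg (y i₂) (y i₁)

theorem stmt4_general (n : ℕ)
    (φ : (Fin (n - 1) → ℝ) → ℝ)
    (hφ : φ = fun y => ∑ S ∈ (Finset.univ : Finset (Fin (n - 1))).powerset,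
      (1 / (S.card + 1) : ℝ) * ∏ j ∈ S, (Real.exp (y j) - 1)) :
    ∀ y : Fin (n - 1) → ℝ, (∀ j, 0 < y j) → ∀ i₁ i₂ : Fin (n - 1),
      0 ≤ (y i₁ - y i₂) *
        (fderiv ℝ φ y (Pi.single i₁ 1) - fderiv ℝ φ y (Pi.single i₂ 1)) := by
  intro y hy i₁ i₂
  have hc : Antitone fun k : ℕ => (1 / (k + 1) : ℝ) := fun a b hab =>
    one_div_le_one_div_of_le (by positivity) (by exact_mod_cast Nat.succ_le_succ hab)
  subst hφ
  exact sub_mul_fderiv_esymmComb_exp_sub_one_nonneg hc (fun j => (hy j).le) i₁ i₂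

theorem stmt4 (n : ℕ) (hn : 2 ≤ n)
    (φ : (Fin (n - 1) → ℝ) → ℝ)
    (hφ : φ = fun y => ∑ S ∈ (Finset.univ : Finset (Fin (n - 1))).powerset,
      (1 / (S.card + 1) : ℝ) * ∏ j ∈ S, (Real.exp (y j) - 1)) :
    ∀ y : Fin (n - 1) → ℝ, (∀ j, 0 < y j) → ∀ i₁ i₂ : Fin (n - 1),
      0 ≤ (y i₁ - y i₂) *
        (fderiv ℝ φ y (Pi.single i₁ 1) - fderiv ℝ φ y (Pi.single i₂ 1)) :=
  stmt4_general n φ hφ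
end

section
/- Fix λ ∈ [0, 1/2] and constants 0 ≤ γ ≤ β ≤ 1 with γ ≤ β. For all x with β ≤ x ≤ 1 and γ > 0, β > 0, the function f(x) = (1-x)/(1-λ+λx) + (1-γ/x)/(1-λ+λβ/x) attains its minimum over [β,1] at x = 1, i.e., f(x) ≥ f(1) = (1-γ)/(1-λ+λβ) for all x ∈ [β,1]. -/
theorem stmt7 (lam β γ : ℝ) (hlam : lam ∈ Set.Icc (0:ℝ) (1/2))
    (hγ : 0 < γ) (hγβ : γ ≤ β) (hβ : β ≤ 1) :
    ∀ x ∈ Set.Icc β 1,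
      (1 - x) / (1 - lam + lam * x) + (1 - γ / x) / (1 - lam + lam * β / x)
        ≥ (1 - γ) / (1 - lam + lam * β) := by
  obtain ⟨hl0, hl2⟩ := hlam
  intro x hx
  obtain ⟨hbx, hx1⟩ := hx
  have hxpos : 0 < x := lt_of_lt_of_le (lt_of_lt_of_le hγ hγβ) hbx
  have hβpos : 0 < β := lt_of_lt_of_le hγ hγβ
  have hD1 : 0 < 1 - lam + lam * x := by nlinarith
  have hD2 : 0 < (1 - lam) * x + lam * β := by nlinarith
  have hD3 : 0 < 1 - lam + lam * β := by nlinarith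
  have hD4 : 0 < 1 - lam + lam * β / x := by
    have : 1 - lam + lam * β / x = ((1 - lam) * x + lam * β) / x := by
      field_simp
    rw [this]; positivity
  have heq : (1 - γ / x) / (1 - lam + lam * β / x) = (x - γ) / ((1 - lam) * x + lam * β) := by
    rw [div_eq_div_iff (ne_of_gt hD4) (ne_of_gt hD2)]
    field_simp
  rw [heq, ge_iff_le, div_add_div _ _ (ne_of_gt hD1) (ne_of_gt hD2),
    div_le_div_iff₀ hD3 (by positivity)]
  nlinarith [mul_nonneg (sub_nonneg.2 hx1) (sub_nonneg.2 hbx),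
    mul_nonneg (sub_nonneg.2 hx1) (sub_nonneg.2 hγβ),
    mul_nonneg hl0 (sub_nonneg.2 hl2), mul_nonneg (mul_nonneg hl0 hl0) (sub_nonneg.2 hx1),
    mul_nonneg (mul_nonneg (sub_nonneg.2 hx1) (sub_nonneg.2 hbx)) hl0,
    mul_nonneg (mul_nonneg (sub_nonneg.2 hx1) (sub_nonneg.2 hγβ)) hl0,
    sq_nonneg (x - β), sq_nonneg (1 - x), mul_pos hD1 hD2]
end

section
/- Let λ ∈ [0, 1/2] and let a₁, a₂, b₁, b₂ ∈ [0,1] satisfy b₁ ≤ a₁ and b₂ ≤ a₂ (interpreting a_i = F_i(τ₁), b_i = F_i(t) with t < τ₁). Then (1-b₁)/(1-λ+λa₁) + (1-b₂)/(1-λ+λa₂) ≥ (1-b₁b₂)/(1-λ+λa₁a₂). -/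
theorem stmt8 (lam a₁ a₂ b₁ b₂ : ℝ) (hlam : lam ∈ Set.Icc (0:ℝ) (1/2))
    (ha₁ : a₁ ∈ Set.Icc (0:ℝ) 1) (ha₂ : a₂ ∈ Set.Icc (0:ℝ) 1)
    (hb₁ : b₁ ∈ Set.Icc (0:ℝ) a₁) (hb₂ : b₂ ∈ Set.Icc (0:ℝ) a₂) :
    (1 - b₁) / (1 - lam + lam * a₁) + (1 - b₂) / (1 - lam + lam * a₂)
      ≥ (1 - b₁ * b₂) / (1 - lam + lam * (a₁ * a₂)) := by
  obtain ⟨hl0, hl2⟩ := hlam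
  obtain ⟨ha10, ha11⟩ := ha₁
  obtain ⟨ha20, ha21⟩ := ha₂
  obtain ⟨hb10, hb11⟩ := hb₁
  obtain ⟨hb20, hb21⟩ := hb₂
  have hd1 : 0 < 1 - lam + lam * a₁ := by nlinarith
  have hd2 : 0 < 1 - lam + lam * a₂ := by nlinarith
  have hd3 : 0 < 1 - lam + lam * (a₁ * a₂) := by
    nlinarith [mul_nonneg hl0 (mul_nonneg ha10 ha20)]
  have key : 0 ≤ (1 - lam) * (1 - lam + lam * a₁) - lam * a₁ * (1 - lam + lam * a₂) := by
    nlinarith [mul_nonneg ha10 ha20]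
  have hA : 0 ≤ (1 - b₁) * (1 - a₂) *
      ((1 - lam) * (1 - lam + lam * a₁) - lam * a₁ * (1 - lam + lam * a₂)) := by
    apply mul_nonneg (mul_nonneg (by linarith) (by linarith)) key
  have hB : 0 ≤ (a₂ - b₂) * (1 - b₁) * (1 - lam) * (1 - lam + lam * a₁) := by
    apply mul_nonneg (mul_nonneg (mul_nonneg (by linarith) (by linarith)) (by linarith)) hd1.le
  have hC : 0 ≤ (1 - b₂) * (1 - lam + lam * a₁) * (lam * a₂) * (a₁ - b₁) := by
    apply mul_nonneg (mul_nonneg (mul_nonneg (by linarith) hd1.le)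
      (mul_nonneg hl0 ha20)) (by linarith)
  rw [ge_iff_le, div_add_div _ _ (ne_of_gt hd1) (ne_of_gt hd2),
    div_le_div_iff₀ hd3 (by positivity)]
  nlinarith [hA, hB, hC]
end

section
/- Let V₁, ..., V_n be independent nonnegative random variables, σ a uniformly random permutation of {1,...,n} independent of the V_i, τ a real threshold, and T = min{i : V_{σ(i)} > τ} the first time the revealed value exceeds τ. Then for each i with P(V_i > τ) > 0, P(σ(T) = i | V_i > τ) = (p / F_i(τ)) · Σ_{S ⊆ [n]\{i}} (1/(|S|+1)) · Π_{j∈S} (1 - F_j(τ))/F_j(τ), where F_j is the CDF of V_j, p = Π_{j∈[n]} F_j(τ), assuming F_j(τ) > 0 for all j. -/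
/-!
Fix the arrival order `σ = π`. The rule selects `i` exactly when `V_i > τ` and every variable
revealed before `i` is at most `τ`, an event of probability `P(V_i > τ) ∏_{j ∈ B} F_j(τ)` by
independence, `B` being the set of variables preceding `i` in `π`. Under a uniform order,
`B = S` with probability `|S|! (n-1-|S|)! / n! = ∫₀¹ t^|S| (1-t)^(n-1-|S|) dt`, so averaging
over orders gives `∫₀¹ ∏_{j ≠ i} (1 - t + t F_j) dt`. After `t ↦ 1 - t`, expanding the product
`∏_{j ≠ i} (F_j + t (1 - F_j))` instead gives the stated sum.
-/

open MeasureTheory ProbabilityTheory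

/-- Stopping time of the time-threshold algorithm (1-based time): the first time `k ∈ [1,n]`
at which the revealed value `V_{σ(k)}` strictly exceeds the threshold `τ k`, and `n+1`
(meaning "never stops") if no such time exists. -/
noncomputable def stopT {Ω : Type*} {n : ℕ} (V : Fin n → Ω → ℝ) (τ : ℕ → ℝ)
    (σ : Ω → Equiv.Perm (Fin n)) (ω : Ω) : ℕ :=
  sInf ({k : ℕ | ∃ j : Fin n, (j : ℕ) + 1 = k ∧ τ k < V (σ ω j) ω} ∪ {n + 1})

open Finset
open scoped Nat

theorem integral_pow_mul_one_sub_pow (a b : ℕ) :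
    ∫ x in (0:ℝ)..1, x ^ a * (1 - x) ^ b = (a ! * b ! : ℝ) / (a + b + 1)! := by
  induction b generalizing a with
  | zero =>
    simp only [pow_zero, mul_one, integral_pow, Nat.add_zero, Nat.factorial_succ]
    push_cast
    field_simp
    simp
  | succ b ih =>
    have hderiv : ∀ x ∈ Set.uIcc (0:ℝ) 1,
        HasDerivAt (fun x : ℝ => x ^ (a + 1) * (1 - x) ^ (b + 1))
          ((a + 1) * (x ^ a * (1 - x) ^ (b + 1)) - (b + 1) * (x ^ (a + 1) * (1 - x) ^ b)) x := by
      intro x _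
      have h1 : HasDerivAt (fun x : ℝ => x ^ (a + 1)) ((a + 1) * x ^ a) x := by
        simpa using hasDerivAt_pow (a + 1) x
      have h2 : HasDerivAt (fun x : ℝ => (1 - x) ^ (b + 1)) (-((b + 1) * (1 - x) ^ b)) x := by
        simpa [Function.comp_def] using
          (hasDerivAt_pow (b + 1) (1 - x)).comp x ((hasDerivAt_id x).const_sub 1)
      exact (h1.fun_mul h2).congr_deriv (by ring)
    have hint : ∀ {f : ℝ → ℝ}, Continuous f → IntervalIntegrable f volume 0 1 :=
      fun hf => hf.intervalIntegrable 0 1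
    -- the derivative integrates to zero: `x ^ (a + 1) * (1 - x) ^ (b + 1)` vanishes at `0` and `1`
    have hparts : (a + 1) * ∫ x in (0:ℝ)..1, x ^ a * (1 - x) ^ (b + 1)
        = (b + 1) * ∫ x in (0:ℝ)..1, x ^ (a + 1) * (1 - x) ^ b := by
      have h := intervalIntegral.integral_eq_sub_of_hasDerivAt hderiv (hint (by fun_prop))
      rw [intervalIntegral.integral_sub (hint (by fun_prop)) (hint (by fun_prop)),
        intervalIntegral.integral_const_mul, intervalIntegral.integral_const_mul] at h
      norm_num at h
      linarith
    refine mul_left_cancel₀ (show (a + 1 : ℝ) ≠ 0 by positivity) ?_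
    rw [hparts, ih, show a + 1 + b + 1 = a + (b + 1) + 1 by ring]
    push_cast [Nat.factorial_succ]
    field_simp

theorem integral_prod_one_sub_add_mul {ι : Type*} [DecidableEq ι] (G : Finset ι)
    (x : ι → ℝ) :
    ∫ t in (0:ℝ)..1, ∏ j ∈ G, (1 - t + t * x j)
      = ∑ S ∈ G.powerset, ((#S)! * (#G - #S)! : ℝ) / (#G + 1)! * ∏ j ∈ S, x j := by
  have hexpand : ∀ t : ℝ, ∏ j ∈ G, (1 - t + t * x j)
      = ∑ S ∈ G.powerset, t ^ #S * (1 - t) ^ (#G - #S) * ∏ j ∈ S, x j := fun t => by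
    simp_rw [add_comm (1 - t), prod_add, prod_mul_distrib, prod_const]
    refine sum_congr rfl fun S hS => ?_
    rw [card_sdiff_of_subset (mem_powerset.mp hS)]
    ring
  simp_rw [hexpand]
  rw [intervalIntegral.integral_finsetSum fun S _ => by
    apply Continuous.intervalIntegrable; fun_prop]
  refine sum_congr rfl fun S hS => ?_
  rw [intervalIntegral.integral_mul_const, integral_pow_mul_one_sub_pow,
    Nat.add_sub_of_le (card_le_card (mem_powerset.mp hS))]

theorem integral_prod_add_mul_one_sub {ι : Type*} [DecidableEq ι] (G : Finset ι)
    (x : ι → ℝ) :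
    ∫ t in (0:ℝ)..1, ∏ j ∈ G, (x j + t * (1 - x j))
      = ∑ S ∈ G.powerset, 1 / (#S + 1 : ℝ) * ((∏ j ∈ S, (1 - x j)) * ∏ j ∈ G \ S, x j) := by
  have hexpand : ∀ t : ℝ, ∏ j ∈ G, (x j + t * (1 - x j))
      = ∑ S ∈ G.powerset, t ^ #S * ((∏ j ∈ S, (1 - x j)) * ∏ j ∈ G \ S, x j) := fun t => by
    simp_rw [add_comm (x _), prod_add, prod_mul_distrib, prod_const, mul_assoc]
  simp_rw [hexpand]
  rw [intervalIntegral.integral_finsetSum fun S _ => by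
    apply Continuous.intervalIntegrable; fun_prop]
  refine sum_congr rfl fun S _ => ?_
  rw [intervalIntegral.integral_mul_const, integral_pow]
  norm_num

-- Both sides are `∫₀¹ ∏_{j ∈ G} (1 - t + t x_j) dt`, the right one after `t ↦ 1 - t`.
theorem sum_powerset_factorial_mul_prod {ι : Type*} [DecidableEq ι] (G : Finset ι)
    (x : ι → ℝ) :
    ∑ S ∈ G.powerset, ((#S)! * (#G - #S)! : ℝ) / (#G + 1)! * ∏ j ∈ S, x j
      = ∑ S ∈ G.powerset, 1 / (#S + 1 : ℝ) * ((∏ j ∈ S, (1 - x j)) * ∏ j ∈ G \ S, x j) := by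
  have hreflect := intervalIntegral.integral_comp_sub_left
    (fun t => ∏ j ∈ G, (x j + t * (1 - x j))) (1 : ℝ) (a := 0) (b := 1)
  rw [← integral_prod_one_sub_add_mul, ← integral_prod_add_mul_one_sub]
  simp only [sub_self, sub_zero] at hreflect
  rw [← hreflect]
  congr 1 with t
  exact prod_congr rfl fun j _ => by ring

theorem Ordering.prod_univ {M : Type*} [CommMonoid M] (f : Ordering → M) :
    ∏ c, f c = f .lt * f .eq * f .gt := by
  simp [prod_eq_multiset_prod, univ, Fintype.elems, mul_assoc]

theorem Equiv.Perm.card_comp_eq {α ι : Type*} [Fintype α] [DecidableEq α] [Fintype ι]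
    [DecidableEq ι] (f g : α → ι)
    (hfg : ∀ c, Fintype.card {a // f a = c} = Fintype.card {a // g a = c}) :
    Fintype.card {π : Equiv.Perm α // f ∘ π = g} = ∏ c, (Fintype.card {a // g a = c})! := by
  -- glue fibrewise bijections into one solution `π₀`; then `π ↦ π₀⁻¹ * π` maps the solutions
  -- onto the stabilizer of `g`
  let π₀ : Equiv.Perm α := Equiv.ofFiberEquiv fun c => Fintype.equivOfCardEq (hfg c).symm
  have hπ₀ : f ∘ π₀ = g := funext (Equiv.ofFiberEquiv_map _)
  rw [← DomMulAct.stabilizer_card g]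
  refine Fintype.card_congr (Equiv.subtypeEquiv (Equiv.mulLeft π₀⁻¹) fun π => ?_)
  rw [← hπ₀]
  simp [Function.comp_def]

-- `π k` is the variable revealed at step `k`, as for `σ ω` in `stopT`.
def revealedBefore {n : ℕ} (π : Equiv.Perm (Fin n)) (i : Fin n) : Finset (Fin n) :=
  {j | π.symm j < π.symm i}

theorem card_revealedBefore {n : ℕ} (π : Equiv.Perm (Fin n)) (i : Fin n) :
    #(revealedBefore π i) = π.symm i := by
  rw [revealedBefore, card_equiv π.symm (t := Iio (π.symm i)) (by simp), Fin.card_Iio]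

theorem self_notMem_revealedBefore {n : ℕ} (π : Equiv.Perm (Fin n)) (i : Fin n) :
    i ∉ revealedBefore π i := by
  simp [revealedBefore]

theorem revealedBefore_subset_erase {n : ℕ} (π : Equiv.Perm (Fin n)) (i : Fin n) :
    revealedBefore π i ⊆ univ.erase i := fun j hj =>
  mem_erase.mpr ⟨fun h => self_notMem_revealedBefore π i (h ▸ hj), mem_univ j⟩

-- `compare (π.symm j) (π.symm i)` for every order `π` that reveals exactly `S` before `i`.
def orderLabel {n : ℕ} (S : Finset (Fin n)) (i j : Fin n) : Ordering :=
  if j ∈ S then .lt else if j = i then .eq else .gt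

section orderLabel

variable {n : ℕ} {S : Finset (Fin n)} {i : Fin n}

theorem orderLabel_eq_iff (hiS : i ∉ S) (j : Fin n) :
    (orderLabel S i j = .lt ↔ j ∈ S) ∧ (orderLabel S i j = .eq ↔ j = i) ∧
      (orderLabel S i j = .gt ↔ j ∈ (insert i S)ᶜ) := by
  simp only [orderLabel, mem_compl, mem_insert]
  split_ifs with hjS hji
  · simp [hjS, show j ≠ i from fun h => hiS (h ▸ hjS)]
  · simp [hji, hiS]
  · simp [hjS, hji]

theorem revealedBefore_eq_iff (hiS : i ∉ S) (hSn : #S < n) (π : Equiv.Perm (Fin n)) :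
    revealedBefore π i = S ↔ orderLabel S i ∘ π = fun m => compare m ⟨#S, hSn⟩ := by
  set k : Fin n := ⟨#S, hSn⟩
  constructor
  · intro h
    have hik : π.symm i = k := Fin.ext (by rw [← card_revealedBefore, h])
    funext m
    have hmS : π m ∈ S ↔ m < k := by simp [← h, revealedBefore, hik]
    have hmi : π m = i ↔ m = k := by rw [← hik, Equiv.eq_symm_apply]
    simp only [orderLabel, Function.comp_apply, hmS, hmi]
    split_ifs with h1 h2
    · exact (compare_lt_iff_lt.mpr h1).symm
    · exact (compare_eq_iff_eq.mpr h2).symm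
    · exact (compare_gt_iff_gt.mpr (lt_of_le_of_ne (not_lt.mp h1) (Ne.symm h2))).symm
  · intro h
    have hlabel : ∀ j, orderLabel S i j = compare (π.symm j) k := fun j => by
      simpa using congrFun h (π.symm j)
    have hik : π.symm i = k :=
      compare_eq_iff_eq.mp ((hlabel i).symm.trans ((orderLabel_eq_iff hiS i).2.1.mpr rfl))
    ext j
    simp [revealedBefore, ← (orderLabel_eq_iff hiS j).1, hlabel, hik, compare_lt_iff_lt]

theorem card_orderLabel_eq (hiS : i ∉ S) (hSn : #S < n) (c : Ordering) :
    Fintype.card {j // orderLabel S i j = c}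
      = Fintype.card {m : Fin n // compare m ⟨#S, hSn⟩ = c} := by
  rw [Fintype.card_subtype, Fintype.card_subtype]
  cases c <;> simp only [orderLabel_eq_iff hiS, compare_lt_iff_lt, compare_eq_iff_eq,
    compare_gt_iff_gt, filter_mem_eq_inter, univ_inter, filter_gt_eq_Iio, filter_lt_eq_Ioi,
    filter_eq', mem_univ, if_true, Fin.card_Iio, Fin.card_Ioi, card_singleton, card_compl,
    card_insert_of_notMem hiS, Fintype.card_fin]
  omega

end orderLabel

theorem card_filter_revealedBefore_eq {n : ℕ} (i : Fin n) {S : Finset (Fin n)}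
    (hS : S ⊆ univ.erase i) :
    #{π : Equiv.Perm (Fin n) | revealedBefore π i = S} = (#S)! * (n - 1 - #S)! := by
  have hiS : i ∉ S := fun h => by simpa using hS h
  have hSn : #S < n := by simpa using card_lt_univ_of_notMem hiS
  rw [← Fintype.card_subtype, Fintype.card_congr (Equiv.subtypeEquivRight
    (revealedBefore_eq_iff hiS hSn)), Equiv.Perm.card_comp_eq _ _ (card_orderLabel_eq hiS hSn),
    Ordering.prod_univ]
  simp only [Fintype.card_subtype, compare_lt_iff_lt, compare_eq_iff_eq, compare_gt_iff_gt,
    filter_gt_eq_Iio, filter_lt_eq_Ioi, filter_eq', mem_univ, if_true, Fin.card_Iio, Fin.card_Ioi,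
    card_singleton, Nat.factorial_one, mul_one]

theorem inv_factorial_mul_sum_perm_prod_revealedBefore {n : ℕ} (i : Fin n) (x : Fin n → ℝ) :
    (n ! : ℝ)⁻¹ * ∑ π : Equiv.Perm (Fin n), ∏ j ∈ revealedBefore π i, x j
      = ∑ S ∈ (univ.erase i).powerset,
          1 / (#S + 1 : ℝ) * ((∏ j ∈ S, (1 - x j)) * ∏ j ∈ univ.erase i \ S, x j) := by
  have hcard : #(univ.erase i) = n - 1 := by simp
  have hn : n - 1 + 1 = n := Nat.sub_add_cancel i.pos
  rw [← sum_powerset_factorial_mul_prod, hcard, hn, ← sum_fiberwise_of_maps_to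
    (fun π _ => mem_powerset.mpr (revealedBefore_subset_erase π i)), mul_sum]
  refine sum_congr rfl fun S hS => ?_
  rw [sum_congr rfl fun π hπ => by rw [(mem_filter.mp hπ).2], sum_const, nsmul_eq_mul,
    card_filter_revealedBefore_eq i (mem_powerset.mp hS)]
  push_cast
  ring

theorem stopT_eq_succ_iff {Ω : Type*} {n : ℕ} (V : Fin n → Ω → ℝ) (τ : ℕ → ℝ)
    (σ : Ω → Equiv.Perm (Fin n)) (ω : Ω) (j : Fin n) :
    stopT V τ σ ω = j + 1 ↔
      τ (j + 1) < V (σ ω j) ω ∧ ∀ k : Fin n, k < j → V (σ ω k) ω ≤ τ (k + 1) := by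
  set stops := {k : ℕ | ∃ j : Fin n, (j : ℕ) + 1 = k ∧ τ k < V (σ ω j) ω} ∪ {n + 1}
  have hmem : ∀ k : Fin n, (k : ℕ) + 1 ∈ stops ↔ τ (k + 1) < V (σ ω k) ω := fun k => by
    simp [stops, Fin.val_inj, k.isLt.ne]
  constructor
  · intro h
    change sInf stops = j + 1 at h
    have hj : (j : ℕ) + 1 ∈ stops := h ▸ Nat.sInf_mem ⟨n + 1, Or.inr rfl⟩
    refine ⟨(hmem j).mp hj, fun k hk => not_lt.mp fun hlt => ?_⟩
    have := h ▸ Nat.sInf_le ((hmem k).mpr hlt)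
    exact absurd hk (not_lt.mpr (by omega))
  · rintro ⟨hj, hbefore⟩
    refine IsLeast.csInf_eq ⟨(hmem j).mpr hj, ?_⟩
    rintro _ (⟨k, rfl, hk⟩ | rfl)
    · exact Nat.succ_le_succ (not_lt.mp fun hlt => (hbefore k hlt).not_gt hk)
    · exact Nat.succ_le_succ j.isLt.le

def selectsAt {n : ℕ} (τ : ℝ) (i : Fin n) (π : Equiv.Perm (Fin n)) : Set (Fin n → ℝ) :=
  {v | τ < v i ∧ ∀ j ∈ revealedBefore π i, v j ≤ τ}

theorem measurableSet_selectsAt {n : ℕ} (τ : ℝ) (i : Fin n) (π : Equiv.Perm (Fin n)) :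
    MeasurableSet (selectsAt τ i π) := by
  simp only [selectsAt, Set.ofPred_and, Set.ofPred_forall]
  measurability

theorem exists_stopT_eq_iff {Ω : Type*} {n : ℕ} (V : Fin n → Ω → ℝ) (τ : ℝ)
    (σ : Ω → Equiv.Perm (Fin n)) (ω : Ω) (i : Fin n) :
    (∃ j : Fin n, (j : ℕ) + 1 = stopT V (fun _ => τ) σ ω ∧ σ ω j = i) ↔
      (fun j => V j ω) ∈ selectsAt τ i (σ ω) := by
  simp only [selectsAt, revealedBefore, Set.mem_ofPred_eq, mem_filter, mem_univ, true_and]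
  constructor
  · rintro ⟨j, hj, rfl⟩
    obtain ⟨hj, hbefore⟩ := (stopT_eq_succ_iff V _ σ ω j).mp hj.symm
    refine ⟨hj, fun k hk => ?_⟩
    have := hbefore _ (by simpa using hk)
    rwa [Equiv.apply_symm_apply] at this
  · rintro ⟨hi, hbefore⟩
    refine ⟨(σ ω).symm i, ((stopT_eq_succ_iff V _ σ ω _).mpr ⟨by simpa using hi, ?_⟩).symm,
      by simp⟩
    exact fun k hk => hbefore _ (by simpa using hk)

theorem ProbabilityTheory.iIndepFun.measure_lt_inter_le {Ω ι : Type*} [MeasurableSpace Ω]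
    {μ : Measure Ω} {V : ι → Ω → ℝ} (hV : iIndepFun V μ) (τ : ℝ) {i : ι} {B : Finset ι}
    (hi : i ∉ B) :
    μ {ω | τ < V i ω ∧ ∀ j ∈ B, V j ω ≤ τ} = μ {ω | τ < V i ω} * ∏ j ∈ B, μ {ω | V j ω ≤ τ} := by
  classical
  set sets : ι → Set ℝ := Function.update (fun _ => Set.Iic τ) i (Set.Ioi τ)
  have hsets_ne : ∀ j ∈ B, sets j = Set.Iic τ := fun j hj =>
    Function.update_of_ne (ne_of_mem_of_not_mem hj hi) _ _
  have hinter : {ω | τ < V i ω ∧ ∀ j ∈ B, V j ω ≤ τ} = ⋂ j ∈ insert i B, V j ⁻¹' sets j := by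
    ext ω
    simp +contextual [sets, hsets_ne]
  rw [hinter, hV.measure_inter_preimage_eq_mul _ fun j _ => ?_, prod_insert hi]
  · congr 1
    · simp only [sets, Function.update_self]
      rfl
    · exact prod_congr rfl fun j hj => by rw [hsets_ne j hj]; rfl
  · by_cases hj : j = i <;> simp [sets, hj, measurableSet_Ioi, measurableSet_Iic]

theorem measure_mem_eq_sum_measure_mul {Ω β κ : Type*} [MeasurableSpace Ω] [MeasurableSpace β]
    [Fintype κ] (μ : Measure Ω) (X : Ω → β) (σ : Ω → κ)
    (hσ : ∀ π, MeasurableSet {ω | σ ω = π})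
    (hindep : ∀ π (A : Set β), MeasurableSet A →
      μ ({ω | σ ω = π} ∩ {ω | X ω ∈ A}) = μ {ω | σ ω = π} * μ {ω | X ω ∈ A})
    (A : κ → Set β) (hA : ∀ π, MeasurableSet (A π)) :
    μ {ω | X ω ∈ A (σ ω)} = ∑ π, μ {ω | σ ω = π} * μ {ω | X ω ∈ A π} := by
  rw [← Measure.restrict_apply_univ, ← Set.preimage_univ (f := σ), ← coe_univ,
    ← sum_measure_preimage_singleton _ fun π _ => hσ π]
  refine sum_congr rfl fun π _ => ?_
  rw [Measure.restrict_apply (show MeasurableSet (σ ⁻¹' {π}) from hσ π), ← hindep π _ (hA π)]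
  congr 1
  ext ω
  simp +contextual

theorem prod_one_sub_mul_prod_sdiff {ι K : Type*} [DecidableEq ι] [Field K] {G S : Finset ι}
    (hS : S ⊆ G) {x : ι → K} (hx : ∀ j ∈ S, x j ≠ 0) :
    (∏ j ∈ S, (1 - x j)) * ∏ j ∈ G \ S, x j = (∏ j ∈ G, x j) * ∏ j ∈ S, (1 - x j) / x j := by
  have hSx : ∏ j ∈ S, x j ≠ 0 := prod_ne_zero_iff.mpr hx
  rw [← prod_sdiff hS, prod_div_distrib]
  field_simp

theorem stmt9_general {Ω : Type*} [MeasurableSpace Ω] (μ : Measure Ω) [IsProbabilityMeasure μ]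
    (n : ℕ) (V : Fin n → Ω → ℝ)
    (hVindep : iIndepFun V μ)
    (σ : Ω → Equiv.Perm (Fin n))
    (hσmeas : ∀ π, MeasurableSet {ω | σ ω = π})
    (hσunif : ∀ π, μ {ω | σ ω = π} = ((n.factorial : ENNReal))⁻¹)
    (hindep : ∀ (π : Equiv.Perm (Fin n)) (A : Set (Fin n → ℝ)), MeasurableSet A →
      μ ({ω | σ ω = π} ∩ {ω | (fun i => V i ω) ∈ A})
        = μ {ω | σ ω = π} * μ {ω | (fun i => V i ω) ∈ A})
    (τ0 : ℝ)
    (F : Fin n → ℝ) (hF : ∀ j, F j = (μ {ω | V j ω ≤ τ0}).toReal)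
    (hFpos : ∀ j, 0 < F j)
    (p : ℝ) (hp : p = ∏ j, F j)
    (i : Fin n) (hi : 0 < (μ {ω | τ0 < V i ω}).toReal) :
    (μ ({ω | ∃ j : Fin n, (j : ℕ) + 1 = stopT V (fun _ => τ0) σ ω ∧ σ ω j = i}
          ∩ {ω | τ0 < V i ω})).toReal / (μ {ω | τ0 < V i ω}).toReal
      = (p / F i) * ∑ S ∈ (Finset.univ.erase i).powerset,
          (1 / (S.card + 1) : ℝ) * ∏ j ∈ S, (1 - F j) / F j := by
  have hevent : {ω | ∃ j : Fin n, (j : ℕ) + 1 = stopT V (fun _ => τ0) σ ω ∧ σ ω j = i}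
      ∩ {ω | τ0 < V i ω} = {ω | (fun j => V j ω) ∈ selectsAt τ0 i (σ ω)} := by
    ext ω
    rw [Set.mem_inter_iff, Set.mem_ofPred_eq, Set.mem_ofPred_eq, exists_stopT_eq_iff]
    exact ⟨And.left, fun h => ⟨h, h.1⟩⟩
  have hmeasure : μ {ω | (fun j => V j ω) ∈ selectsAt τ0 i (σ ω)} = μ {ω | τ0 < V i ω} *
      ((n ! : ENNReal)⁻¹ * ∑ π, ∏ j ∈ revealedBefore π i, μ {ω | V j ω ≤ τ0}) := by
    rw [measure_mem_eq_sum_measure_mul μ _ σ hσmeas hindep _ (measurableSet_selectsAt τ0 i),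
      mul_sum, mul_sum]
    refine sum_congr rfl fun π _ => ?_
    simp only [hσunif, selectsAt, Set.mem_ofPred_eq,
      hVindep.measure_lt_inter_le τ0 (self_notMem_revealedBefore π i)]
    ring
  have hpF : p / F i = ∏ j ∈ univ.erase i, F j := by
    rw [hp, ← mul_prod_erase univ F (mem_univ i), mul_div_cancel_left₀ _ (hFpos i).ne']
  rw [hevent, hmeasure, ENNReal.toReal_mul, mul_div_cancel_left₀ _ hi.ne', ENNReal.toReal_mul,
    ENNReal.toReal_sum fun π _ => ENNReal.prod_ne_top fun j _ => measure_ne_top μ _]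
  simp only [ENNReal.toReal_inv, ENNReal.toReal_natCast, ENNReal.toReal_prod, ← hF]
  rw [inv_factorial_mul_sum_perm_prod_revealedBefore, mul_sum]
  refine sum_congr rfl fun S hS => ?_
  rw [prod_one_sub_mul_prod_sdiff (mem_powerset.mp hS) fun j _ => (hFpos j).ne', hpF]
  ring

theorem stmt9 {Ω : Type*} [MeasurableSpace Ω] (μ : Measure Ω) [IsProbabilityMeasure μ]
    (n : ℕ) (hn : 0 < n) (V : Fin n → Ω → ℝ)
    (hVmeas : ∀ i, Measurable (V i))
    (hVnonneg : ∀ i ω, 0 ≤ V i ω)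
    (hVindep : iIndepFun V μ)
    (σ : Ω → Equiv.Perm (Fin n))
    (hσmeas : ∀ π, MeasurableSet {ω | σ ω = π})
    (hσunif : ∀ π, μ {ω | σ ω = π} = ((n.factorial : ENNReal))⁻¹)
    (hindep : ∀ (π : Equiv.Perm (Fin n)) (A : Set (Fin n → ℝ)), MeasurableSet A →
      μ ({ω | σ ω = π} ∩ {ω | (fun i => V i ω) ∈ A})
        = μ {ω | σ ω = π} * μ {ω | (fun i => V i ω) ∈ A})
    (τ0 : ℝ)
    (F : Fin n → ℝ) (hF : ∀ j, F j = (μ {ω | V j ω ≤ τ0}).toReal)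
    (hFpos : ∀ j, 0 < F j)
    (p : ℝ) (hp : p = ∏ j, F j)
    (i : Fin n) (hi : 0 < (μ {ω | τ0 < V i ω}).toReal) :
    (μ ({ω | ∃ j : Fin n, (j : ℕ) + 1 = stopT V (fun _ => τ0) σ ω ∧ σ ω j = i}
          ∩ {ω | τ0 < V i ω})).toReal / (μ {ω | τ0 < V i ω}).toReal
      = (p / F i) * ∑ S ∈ (Finset.univ.erase i).powerset,
          (1 / (S.card + 1) : ℝ) * ∏ j ∈ S, (1 - F j) / F j :=
  stmt9_general μ n V hVindep σ hσmeas hσunif hindep τ0 F hF hFpos p hp i hi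
end

section
/- Let V₁, ..., V_n be independent nonnegative random variables with continuous CDFs, σ a uniform random permutation, τ with p = P(max_i V_i ≤ τ) ∈ (0,1), and T the stopping time of the single-threshold rule at τ. Then for every t ≥ 0, P(V_{σ(T)} > t) ≥ min{1-p, (1-p)/(-ln p)} · P(max_{i∈[n]} V_i > t). -/
/-!
For `t ≤ τ` the gambler stops whenever some value exceeds `τ`, and then at a value above `t`;
this happens with probability `1 - p`.

For `t > τ`, fix the values. With `A` the set of values above `τ` and `B ⊆ A` those above `t`,
the gambler succeeds iff the first element of `A` in the uniform random order lies in `B`, which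
has conditional probability `|B| / |A| = ∑_{i ∈ B} 1 / (1 + N_i)`, where `N_i` counts the other
values above `τ`. Writing `1 / (1 + N_i) = ∫₀¹ u ^ N_i du` and using independence,
`E[1{V_i > t} / (1 + N_i)] = P(V_i > t) ∫₀¹ ∏_{j ≠ i} (1 - q_j + q_j u) du` with
`q_j = P(V_j > τ)`. Bernoulli's inequality bounds the integrand below by
`(∏_j (1 - q_j)) ^ (1 - u) ≥ p ^ (1 - u)`, whose integral is `(1 - p) / (-log p)`, and a union
bound over `i` finishes the proof.
-/

open MeasureTheory ProbabilityTheory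

open Finset Equiv

theorem IsMinOn.eq_of_injective {α β : Type*} [PartialOrder β] {f : α → β} {s : Set α}
    {a b : α} (hf : Function.Injective f) (ha : IsMinOn f s a) (hb : IsMinOn f s b) (has : a ∈ s)
    (hbs : b ∈ s) : a = b :=
  hf (le_antisymm (ha hbs) (hb has))

section FirstInOrder

variable {α : Type*} [DecidableEq α] {A B : Finset α} {a b : α}

theorem swap_apply_mem_iff {x : α} (ha : a ∈ A) (hb : b ∈ A) : swap a b x ∈ A ↔ x ∈ A := by
  rcases eq_or_ne x a with rfl | hxa
  · simp [ha, hb]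
  rcases eq_or_ne x b with rfl | hxb
  · simp [ha, hb]
  · rw [swap_apply_of_ne_of_ne hxa hxb]

variable [LinearOrder α]

theorem IsMinOn.swap_mul {π : Perm α} (h : IsMinOn π.symm A a) (ha : a ∈ A) (hb : b ∈ A) :
    IsMinOn (swap a b * π).symm A b := by
  intro c hc
  have : swap a b c ∈ A := (swap_apply_mem_iff ha hb).2 hc
  simpa [Perm.mul_def, swap_apply_right] using h this

variable [Fintype α]

open Classical in
theorem card_isMinOn_symm_eq (ha : a ∈ A) (hb : b ∈ A) :
    #{π : Perm α | IsMinOn π.symm A a} = #{π : Perm α | IsMinOn π.symm A b} := by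
  refine card_nbij' (swap a b * ·) (swap a b * ·) ?_ ?_ ?_ ?_ <;> intro π hπ
  · simpa using (mem_filter.1 hπ).2.swap_mul ha hb
  · simpa [swap_comm a b] using (mem_filter.1 hπ).2.swap_mul hb ha
  · simp [← mul_assoc]
  · simp [← mul_assoc]

open Classical in
theorem card_exists_isMinOn_symm (hBA : B ⊆ A) :
    #{π : Perm α | ∃ b ∈ B, IsMinOn π.symm A b}
      = ∑ b ∈ B, #{π : Perm α | IsMinOn π.symm A b} := by
  rw [← card_biUnion]
  · congr 1
    ext π
    simp
  · intro a ha b hb hab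
    refine disjoint_left.2 fun π hπa hπb => hab ?_
    exact (mem_filter.1 hπa).2.eq_of_injective π.symm.injective (mem_filter.1 hπb).2 (hBA ha)
      (hBA hb)

open Classical in
theorem card_exists_isMinOn_symm_mul_card (hBA : B ⊆ A) :
    #{π : Perm α | ∃ b ∈ B, IsMinOn π.symm A b} * #A = #B * (Fintype.card α).factorial := by
  rcases A.eq_empty_or_nonempty with rfl | ⟨a, ha⟩
  · simp [subset_empty.1 hBA]
  have hconst : ∀ b ∈ A,
      #{π : Perm α | IsMinOn π.symm A b} = #{π : Perm α | IsMinOn π.symm A a} :=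
    fun b hb => card_isMinOn_symm_eq hb ha
  have htotal : #{π : Perm α | IsMinOn π.symm A a} * #A = (Fintype.card α).factorial := by
    rw [← Fintype.card_perm, ← card_univ, mul_comm, ← smul_eq_mul, ← sum_const,
      ← sum_congr rfl hconst, ← card_exists_isMinOn_symm subset_rfl]
    congr 1
    refine filter_true_of_mem fun π _ => ?_
    obtain ⟨b, hb, hmin⟩ := A.exists_min_image π.symm ⟨a, ha⟩
    exact ⟨b, hb, fun c hc => hmin c hc⟩
  rw [card_exists_isMinOn_symm hBA, sum_congr rfl fun b hb => hconst b (hBA hb), sum_const,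
    smul_eq_mul, mul_assoc, htotal]

end FirstInOrder

theorem integral_rpow_one_sub {p : ℝ} (hp0 : 0 < p) (hp1 : p ≠ 1) :
    ∫ u in (0:ℝ)..1, p ^ (1 - u) = (1 - p) / -Real.log p := by
  have hlog : Real.log p ≠ 0 := Real.log_ne_zero_of_pos_of_ne_one hp0 hp1
  rw [intervalIntegral.integral_comp_sub_left (fun u => p ^ u), sub_self, sub_zero,
    intervalIntegral.integral_eq_sub_of_hasDerivAt (f := fun u => p ^ u / Real.log p)]
  · field_simp
    simp
  · intro u _
    simpa [hlog] using
      (Real.hasStrictDerivAt_const_rpow hp0 u).hasDerivAt.div_const (Real.log p)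
  · exact (continuous_const.rpow continuous_id fun _ => Or.inl hp0.ne').intervalIntegrable 0 1

theorem prod_one_sub_rpow_le_prod {ι : Type*} {S : Finset ι} {q : ι → ℝ}
    (hq : ∀ j ∈ S, q j ≤ 1) {u : ℝ} (hu0 : 0 ≤ u) (hu1 : u ≤ 1) :
    (∏ j ∈ S, (1 - q j)) ^ (1 - u) ≤ ∏ j ∈ S, (1 - q j + q j * u) := by
  have hq' : ∀ j ∈ S, 0 ≤ 1 - q j := fun j hj => sub_nonneg.2 (hq j hj)
  rw [← Real.finsetProd_rpow S _ hq']
  refine prod_le_prod (fun j hj => Real.rpow_nonneg (hq' j hj) _) fun j hj => ?_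
  have := rpow_one_add_le_one_add_mul_self (s := -q j) (by linarith [hq j hj])
    (sub_nonneg.2 hu1) (by linarith)
  rw [← sub_eq_add_neg] at this
  linarith

theorem div_neg_log_le_integral_prod {ι : Type*} {S : Finset ι} {q : ι → ℝ}
    (hq : ∀ j ∈ S, q j ≤ 1) {p : ℝ} (hp0 : 0 < p) (hp1 : p ≠ 1)
    (hpq : p ≤ ∏ j ∈ S, (1 - q j)) :
    (1 - p) / -Real.log p ≤ ∫ u in (0:ℝ)..1, ∏ j ∈ S, (1 - q j + q j * u) := by
  rw [← integral_rpow_one_sub hp0 hp1]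
  refine intervalIntegral.integral_mono_on zero_le_one
    ((continuous_const.rpow (continuous_const.sub continuous_id)
      fun _ => Or.inl hp0.ne').intervalIntegrable 0 1)
    ((by fun_prop : Continuous fun u : ℝ => ∏ j ∈ S, (1 - q j + q j * u)).intervalIntegrable
      0 1)
    fun u hu => ?_
  exact (Real.rpow_le_rpow hp0.le hpq (by linarith [hu.2])).trans
    (prod_one_sub_rpow_le_prod hq hu.1 hu.2)

namespace MeasureTheory

variable {Ω : Type*} [MeasurableSpace Ω] {μ : Measure Ω}

theorem integral_intervalIntegral_comm [IsFiniteMeasure μ] {F : Ω → ℝ → ℝ}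
    (hF : Measurable (Function.uncurry F)) {a b C : ℝ} (hab : a ≤ b)
    (hC : ∀ ω, ∀ u ∈ Set.Ioc a b, |F ω u| ≤ C) :
    ∫ ω, (∫ u in a..b, F ω u) ∂μ = ∫ u in a..b, ∫ ω, F ω u ∂μ := by
  simp only [intervalIntegral.integral_of_le hab]
  refine integral_integral_swap (Integrable.of_bound hF.aestronglyMeasurable C ?_)
  rw [← Measure.restrict_univ (μ := μ), Measure.prod_restrict]
  filter_upwards [ae_restrict_mem (MeasurableSet.univ.prod measurableSet_Ioc)] with x hx
  exact hC x.1 x.2 hx.2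

theorem integral_ite [IsProbabilityMeasure μ] {P : Ω → Prop} [DecidablePred P]
    (hP : MeasurableSet {ω | P ω}) (a b : ℝ) :
    ∫ ω, (if P ω then a else b) ∂μ = a * μ.real {ω | P ω} + b * (1 - μ.real {ω | P ω}) := by
  have := integral_piecewise (μ := μ) (f := fun _ => a) (g := fun _ => b) hP
    (integrable_const a).integrableOn (integrable_const b).integrableOn
  simp only [setIntegral_const, probReal_compl_eq_one_sub hP, smul_eq_mul] at this
  rw [mul_comm a, mul_comm b, ← this]
  rfl

theorem measurable_card_filter {ι : Type*} {s : Finset ι} {P : ι → Ω → Prop}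
    [∀ j ω, Decidable (P j ω)] (hP : ∀ j, MeasurableSet {ω | P j ω}) :
    Measurable fun ω => (#{j ∈ s | P j ω} : ℝ) := by
  simp_rw [natCast_card_filter]
  exact Finset.measurable_sum _ fun j _ =>
    Measurable.ite (hP j) measurable_const measurable_const

theorem integral_card_filter_mem {G : Type*} [Fintype G] [IsFiniteMeasure μ] {T : G → Set Ω}
    (hT : ∀ g, MeasurableSet (T g)) [∀ ω g, Decidable (ω ∈ T g)] :
    ∫ ω, (#{g | ω ∈ T g} : ℝ) ∂μ = ∑ g, μ.real (T g) := by
  have hcard : ∀ ω, (#{g | ω ∈ T g} : ℝ) = ∑ g, (T g).indicator 1 ω := fun ω => by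
    simp [Set.indicator_apply]
  rw [integral_congr_ae (ae_of_all _ hcard),
    integral_finsetSum _ fun g _ => (integrable_const 1).indicator (hT g)]
  simp [integral_indicator_one (hT _)]

theorem mul_sum_measureReal_le_of_indep {G β : Type*} [MeasurableSpace β] [Fintype G]
    [IsFiniteMeasure μ] {σ : Ω → G} {X : Ω → β} {c : ENNReal}
    (hX : Measurable X) (hσmeas : ∀ g, MeasurableSet {ω | σ ω = g})
    (hσ : ∀ g, μ {ω | σ ω = g} = c)
    (hindep : ∀ g (A : Set β), MeasurableSet A →
      μ ({ω | σ ω = g} ∩ X ⁻¹' A) = μ {ω | σ ω = g} * μ (X ⁻¹' A))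
    {S : G → Set β} (hS : ∀ g, MeasurableSet (S g)) {E : Set Ω}
    (hE : ∀ ω, X ω ∈ S (σ ω) → ω ∈ E) :
    c.toReal * ∑ g, μ.real (X ⁻¹' S g) ≤ μ.real E := by
  have hpiece : ∀ g, c.toReal * μ.real (X ⁻¹' S g) = μ.real ({ω | σ ω = g} ∩ X ⁻¹' S g) :=
    fun g => by
      rw [measureReal_def, measureReal_def, hindep g _ (hS g), hσ, ENNReal.toReal_mul]
  rw [mul_sum, sum_congr rfl fun g _ => hpiece g, ← measureReal_biUnion_finset]
  · refine measureReal_mono fun ω hω => ?_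
    obtain ⟨g, -, rfl, hω⟩ := Set.mem_iUnion₂.1 hω
    exact hE ω hω
  · exact fun g _ g' _ hne => Set.disjoint_left.2 fun ω h h' => hne (h.1.symm.trans h'.1)
  · exact fun g _ => (hσmeas g).inter (hX (hS g))

end MeasureTheory

/-- The coordinatewise factors of `1{t < x i} * u ^ #{j ≠ i | τ < x j}`: in this product form,
independence of the coordinates factors its expectation. -/
noncomputable def exceedWeight {ι : Type*} [DecidableEq ι] (i : ι) (τ t u : ℝ) (j : ι)
    (x : ℝ) : ℝ :=
  if j = i then (if t < x then 1 else 0) else (if τ < x then u else 1)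

theorem measurable_exceedWeight_uncurry {ι : Type*} [DecidableEq ι] (i : ι) (τ t : ℝ)
    (j : ι) :
    Measurable fun p : ℝ × ℝ => exceedWeight i τ t p.1 j p.2 := by
  unfold exceedWeight
  split_ifs
  · exact Measurable.ite (measurableSet_lt measurable_const measurable_snd) measurable_const
      measurable_const
  · exact Measurable.ite (measurableSet_lt measurable_const measurable_snd) measurable_fst
      measurable_const

section Independence

variable {ι : Type*} [Fintype ι] {Ω : Type*} [MeasurableSpace Ω] {μ : Measure Ω}
  [IsProbabilityMeasure μ] {V : ι → Ω → ℝ}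

theorem ProbabilityTheory.iIndepFun.measureReal_forall_le_eq_prod (hV : iIndepFun V μ)
    (hVmeas : ∀ i, Measurable (V i)) (τ : ℝ) :
    μ.real {ω | ∀ j, V j ω ≤ τ} = ∏ j, (1 - μ.real {ω | τ < V j ω}) := by
  have hset : {ω | ∀ j, V j ω ≤ τ} = ⋂ j ∈ univ, V j ⁻¹' Set.Iic τ := by
    ext ω
    simp
  rw [measureReal_def, hset,
    hV.measure_inter_preimage_eq_mul univ fun _ _ => measurableSet_Iic, ENNReal.toReal_prod]
  refine prod_congr rfl fun j _ => ?_
  rw [← probReal_compl_eq_one_sub (measurableSet_lt measurable_const (hVmeas j)),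
    measureReal_def]
  congr 2
  ext ω
  simp

variable [DecidableEq ι]

theorem prod_exceedWeight (i : ι) (τ t u : ℝ) (x : ι → ℝ) :
    ∏ j, exceedWeight i τ t u j (x j)
      = (if t < x i then 1 else 0) * u ^ #{j ∈ univ.erase i | τ < x j} := by
  rw [← mul_prod_erase univ _ (mem_univ i), ← prod_const, prod_filter, exceedWeight,
    if_pos rfl]
  congr 1
  refine prod_congr rfl fun j hj => ?_
  rw [exceedWeight, if_neg (ne_of_mem_erase hj)]

theorem intervalIntegral_prod_exceedWeight (i : ι) (τ t : ℝ) (x : ι → ℝ) :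
    ∫ u in (0:ℝ)..1, ∏ j, exceedWeight i τ t u j (x j)
      = (if t < x i then 1 else 0) / (#{j ∈ univ.erase i | τ < x j} + 1 : ℝ) := by
  simp only [prod_exceedWeight, intervalIntegral.integral_const_mul, integral_pow]
  simp [ite_div]

theorem abs_prod_exceedWeight_le_one (i : ι) (τ t : ℝ) {u : ℝ} (hu0 : 0 ≤ u) (hu1 : u ≤ 1)
    (x : ι → ℝ) : |∏ j, exceedWeight i τ t u j (x j)| ≤ 1 := by
  rw [prod_exceedWeight, abs_mul, abs_pow, abs_of_nonneg hu0]
  refine mul_le_one₀ ?_ (pow_nonneg hu0 _) (pow_le_one₀ hu0 hu1)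
  split_ifs <;> simp

theorem ProbabilityTheory.iIndepFun.integral_prod_exceedWeight (hV : iIndepFun V μ)
    (hVmeas : ∀ i, Measurable (V i)) (i : ι) (τ t u : ℝ) :
    ∫ ω, ∏ j, exceedWeight i τ t u j (V j ω) ∂μ
      = μ.real {ω | t < V i ω} * ∏ j ∈ univ.erase i,
          (1 - μ.real {ω | τ < V j ω} + μ.real {ω | τ < V j ω} * u) := by
  have hmeas : ∀ j, Measurable (exceedWeight i τ t u j) := fun j =>
    (measurable_exceedWeight_uncurry i τ t j).comp measurable_prodMk_left
  rw [hV.integral_fun_prod_comp (fun j => (hVmeas j).aemeasurable)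
    fun j => (hmeas j).aestronglyMeasurable, ← mul_prod_erase univ _ (mem_univ i)]
  congr 1
  · simp only [exceedWeight, ↓reduceIte]
    rw [integral_ite (measurableSet_lt measurable_const (hVmeas i))]
    ring
  · refine prod_congr rfl fun j hj => ?_
    simp only [exceedWeight, if_neg (ne_of_mem_erase hj)]
    rw [integral_ite (measurableSet_lt measurable_const (hVmeas j))]
    ring

theorem ProbabilityTheory.iIndepFun.integral_div_card_filter_erase_add_one
    (hV : iIndepFun V μ) (hVmeas : ∀ i, Measurable (V i)) (i : ι) (τ t : ℝ) :
    ∫ ω, (if t < V i ω then 1 else 0) / (#{j ∈ univ.erase i | τ < V j ω} + 1 : ℝ) ∂μ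
      = μ.real {ω | t < V i ω} * ∫ u in (0:ℝ)..1, ∏ j ∈ univ.erase i,
          (1 - μ.real {ω | τ < V j ω} + μ.real {ω | τ < V j ω} * u) := by
  have hmeas : Measurable fun p : Ω × ℝ => ∏ j, exceedWeight i τ t p.2 j (V j p.1) :=
    Finset.measurable_prod _ fun j _ => (measurable_exceedWeight_uncurry i τ t j).comp
      (measurable_snd.prodMk ((hVmeas j).comp measurable_fst))
  rw [integral_congr_ae (ae_of_all _ fun ω =>
      (intervalIntegral_prod_exceedWeight i τ t fun j => V j ω).symm),
    integral_intervalIntegral_comm hmeas zero_le_one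
      fun ω u hu => abs_prod_exceedWeight_le_one i τ t hu.1.le hu.2 _,
    ← intervalIntegral.integral_const_mul]
  simp_rw [hV.integral_prod_exceedWeight hVmeas]

theorem integrable_div_card_filter_erase_add_one (hVmeas : ∀ i, Measurable (V i)) (i : ι)
    (τ t : ℝ) :
    Integrable
      (fun ω => (if t < V i ω then 1 else 0) / (#{j ∈ univ.erase i | τ < V j ω} + 1 : ℝ)) μ := by
  refine Integrable.of_bound (C := 1) (Measurable.aestronglyMeasurable ?_)
    (ae_of_all _ fun ω => ?_)
  · exact (Measurable.ite (measurableSet_lt measurable_const (hVmeas i)) measurable_const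
      measurable_const).div ((measurable_card_filter fun j =>
        measurableSet_lt measurable_const (hVmeas j)).add_const 1)
  · rw [Real.norm_eq_abs, abs_div, abs_of_pos (by positivity : (0:ℝ) < _ + 1)]
    refine div_le_one_of_le₀ ?_ (by positivity)
    split_ifs <;> simp
    positivity

end Independence

section StoppingTime

variable {Ω : Type*} {n : ℕ} {V : Fin n → Ω → ℝ} {σ : Ω → Perm (Fin n)} {τ : ℝ} {ω : Ω}

theorem stopT_const_eq_of_isMinOn {b : Fin n} (hb : τ < V b ω)
    (hmin : IsMinOn (σ ω).symm {i | τ < V i ω} b) :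
    stopT V (fun _ => τ) σ ω = (σ ω).symm b + 1 := by
  refine le_antisymm (Nat.sInf_le (Or.inl ⟨_, rfl, by simpa using hb⟩))
    (le_csInf ⟨n + 1, Or.inr rfl⟩ ?_)
  rintro k (⟨j, rfl, hj⟩ | rfl)
  · have := isMinOn_iff.1 hmin (σ ω j) hj
    rw [symm_apply_apply] at this
    exact Nat.succ_le_succ this
  · exact Nat.succ_le_succ ((σ ω).symm b).isLt.le

theorem exists_stopT_const_of_isMinOn {t : ℝ} {b : Fin n} (hτ : τ < V b ω) (ht : t < V b ω)
    (hmin : IsMinOn (σ ω).symm {i | τ < V i ω} b) :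
    ∃ j : Fin n, (j : ℕ) + 1 = stopT V (fun _ => τ) σ ω ∧ t < V (σ ω j) ω :=
  ⟨(σ ω).symm b, (stopT_const_eq_of_isMinOn hτ hmin).symm, by simpa using ht⟩

theorem exists_stopT_const_of_le {t : ℝ} (htτ : t ≤ τ) (h : ∃ i, τ < V i ω) :
    ∃ j : Fin n, (j : ℕ) + 1 = stopT V (fun _ => τ) σ ω ∧ t < V (σ ω j) ω := by
  obtain ⟨b, hb, hmin⟩ := Set.exists_min_image {i | τ < V i ω} (σ ω).symm (Set.toFinite _) h
  exact exists_stopT_const_of_isMinOn hb (htτ.trans_lt hb) (isMinOn_iff.2 hmin)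

end StoppingTime

/-- The values `v` for which, scanning the coordinates in the order `π`, the first one above `τ`
is also above `t`. -/
def firstAboveExceeds {n : ℕ} (π : Perm (Fin n)) (τ t : ℝ) : Set (Fin n → ℝ) :=
  {v | ∃ b, t < v b ∧ IsMinOn π.symm {i | τ < v i} b}

theorem measurableSet_firstAboveExceeds {n : ℕ} (π : Perm (Fin n)) (τ t : ℝ) :
    MeasurableSet (firstAboveExceeds π τ t) := by
  simp only [firstAboveExceeds, isMinOn_iff]
  exact Measurable.setOf (by fun_prop)

theorem card_filter_erase_add_one {α : Type*} [Fintype α] [DecidableEq α] {p : α → Prop}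
    [DecidablePred p] {i : α} (hi : p i) : #{j ∈ univ.erase i | p j} + 1 = #{j | p j} := by
  rw [filter_erase, card_erase_add_one (by simpa using hi)]

open Classical in
theorem inv_factorial_mul_card_firstAboveExceeds {n : ℕ} (v : Fin n → ℝ) {τ t : ℝ}
    (hτt : τ < t) :
    ((n.factorial : ℝ))⁻¹ * #{π : Perm (Fin n) | v ∈ firstAboveExceeds π τ t}
      = ∑ i, (if t < v i then 1 else 0) / (#{j ∈ univ.erase i | τ < v j} + 1 : ℝ) := by
  set A : Finset (Fin n) := {j | τ < v j}
  set B : Finset (Fin n) := {j | t < v j}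
  have hBA : B ⊆ A := monotone_filter_right _ fun j _ hj => hτt.trans hj
  have hcount : #{π : Perm (Fin n) | v ∈ firstAboveExceeds π τ t} * #A = #B * n.factorial := by
    -- `convert`, since the order on `Fin n` is reached through different instance paths
    convert card_exists_isMinOn_symm_mul_card hBA using 3
    · ext π
      simp only [mem_filter, mem_univ, true_and, A, B, coe_filter_univ]
      rfl
    · exact (Fintype.card_fin n).symm
  have hsum : ∑ i, (if t < v i then 1 else 0) / (#{j ∈ univ.erase i | τ < v j} + 1 : ℝ)
      = #B / #A := by
    calc ∑ i, (if t < v i then 1 else 0) / (#{j ∈ univ.erase i | τ < v j} + 1 : ℝ)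
        = ∑ i, if i ∈ B then (1 / #A : ℝ) else 0 := sum_congr rfl fun i _ => by
          by_cases h : t < v i
          · rw [if_pos h, if_pos (by simpa [B] using h),
              ← card_filter_erase_add_one (p := (τ < v ·)) (hτt.trans h)]
            push_cast
            rfl
          · rw [if_neg h, if_neg (by simpa [B] using h), zero_div]
      _ = #B / #A := by rw [sum_ite_mem, univ_inter, sum_const, nsmul_eq_mul, mul_one_div]
  rw [hsum]
  rcases B.eq_empty_or_nonempty with hB | hB
  · have : #{π : Perm (Fin n) | v ∈ firstAboveExceeds π τ t} = 0 := by
      refine card_eq_zero.2 (filter_eq_empty_iff.2 fun π _ ⟨b, hb, _⟩ => ?_)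
      exact (eq_empty_iff_forall_notMem.1 hB) b (by simpa [B] using hb)
    simp [this, hB]
  · have : (#A : ℝ) ≠ 0 := by exact_mod_cast (hB.mono hBA).card_pos.ne'
    field_simp
    exact_mod_cast hcount.trans (mul_comm _ _)

section StoppedValue

variable {Ω : Type*} [MeasurableSpace Ω] {μ : Measure Ω} [IsProbabilityMeasure μ] {n : ℕ}
  {V : Fin n → Ω → ℝ} {σ : Ω → Perm (Fin n)} {τ t : ℝ}

theorem one_sub_measureReal_forall_le_le_stopped_gt (hVmeas : ∀ i, Measurable (V i)) (htτ : t ≤ τ) :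
    1 - μ.real {ω | ∀ i, V i ω ≤ τ}
      ≤ μ.real {ω | ∃ j : Fin n, (j : ℕ) + 1 = stopT V (fun _ => τ) σ ω ∧ t < V (σ ω j) ω} := by
  rw [← probReal_compl_eq_one_sub (Measurable.setOf (by fun_prop))]
  refine measureReal_mono fun ω hω => exists_stopT_const_of_le htτ ?_
  simpa using hω

theorem sum_measureReal_mul_integral_le_stopped_gt (hVmeas : ∀ i, Measurable (V i))
    (hVindep : iIndepFun V μ) (hσmeas : ∀ π, MeasurableSet {ω | σ ω = π})
    (hσunif : ∀ π, μ {ω | σ ω = π} = ((n.factorial : ENNReal))⁻¹)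
    (hindep : ∀ (π : Perm (Fin n)) (A : Set (Fin n → ℝ)), MeasurableSet A →
      μ ({ω | σ ω = π} ∩ {ω | (fun i => V i ω) ∈ A})
        = μ {ω | σ ω = π} * μ {ω | (fun i => V i ω) ∈ A})
    (hτt : τ < t) :
    ∑ i, μ.real {ω | t < V i ω} * ∫ u in (0:ℝ)..1, ∏ j ∈ univ.erase i,
        (1 - μ.real {ω | τ < V j ω} + μ.real {ω | τ < V j ω} * u)
      ≤ μ.real {ω | ∃ j : Fin n, (j : ℕ) + 1 = stopT V (fun _ => τ) σ ω ∧ t < V (σ ω j) ω} := by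
  classical
  set X : Ω → Fin n → ℝ := fun ω i => V i ω
  have hX : Measurable X := measurable_pi_lambda _ hVmeas
  calc ∑ i, μ.real {ω | t < V i ω} * ∫ u in (0:ℝ)..1, ∏ j ∈ univ.erase i,
        (1 - μ.real {ω | τ < V j ω} + μ.real {ω | τ < V j ω} * u)
      = ∫ ω, ∑ i, (if t < V i ω then 1 else 0) / (#{j ∈ univ.erase i | τ < V j ω} + 1 : ℝ) ∂μ := by
        rw [integral_finsetSum _ fun i _ => integrable_div_card_filter_erase_add_one hVmeas i τ t]
        exact sum_congr rfl fun i _ =>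
          (hVindep.integral_div_card_filter_erase_add_one hVmeas i τ t).symm
    _ = ∫ ω, (n.factorial : ℝ)⁻¹ * #{π : Perm (Fin n) | ω ∈ X ⁻¹' firstAboveExceeds π τ t} ∂μ := by
        congr 1
        ext ω
        exact (inv_factorial_mul_card_firstAboveExceeds (X ω) hτt).symm
    _ = ((n.factorial : ENNReal))⁻¹.toReal * ∑ π, μ.real (X ⁻¹' firstAboveExceeds π τ t) := by
        rw [integral_const_mul,
          integral_card_filter_mem fun π => hX (measurableSet_firstAboveExceeds π τ t)]
        simp
    _ ≤ _ := mul_sum_measureReal_le_of_indep hX hσmeas hσunif hindep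
        (fun π => measurableSet_firstAboveExceeds π τ t)
        fun ω ⟨b, hbt, hmin⟩ => exists_stopT_const_of_isMinOn (hτt.trans hbt) hbt hmin

end StoppedValue

theorem stmt11_general {Ω : Type*} [MeasurableSpace Ω] (μ : Measure Ω) [IsProbabilityMeasure μ]
    (n : ℕ) (V : Fin n → Ω → ℝ)
    (hVmeas : ∀ i, Measurable (V i))
    (hVindep : iIndepFun V μ)
    (σ : Ω → Equiv.Perm (Fin n))
    (hσmeas : ∀ π, MeasurableSet {ω | σ ω = π})
    (hσunif : ∀ π, μ {ω | σ ω = π} = ((n.factorial : ENNReal))⁻¹)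
    (hindep : ∀ (π : Equiv.Perm (Fin n)) (A : Set (Fin n → ℝ)), MeasurableSet A →
      μ ({ω | σ ω = π} ∩ {ω | (fun i => V i ω) ∈ A})
        = μ {ω | σ ω = π} * μ {ω | (fun i => V i ω) ∈ A})
    (τ0 : ℝ)
    (p : ℝ) (hp : p = (μ {ω | ∀ i, V i ω ≤ τ0}).toReal) (hp0 : 0 < p) (hp1 : p < 1) :
    ∀ t : ℝ, 0 ≤ t →
      (μ {ω | ∃ j : Fin n, (j : ℕ) + 1 = stopT V (fun _ => τ0) σ ω
            ∧ t < V (σ ω j) ω}).toReal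
        ≥ min (1 - p) ((1 - p) / (-Real.log p)) * (μ {ω | ∃ i, t < V i ω}).toReal := by
  intro t _
  rw [← measureReal_def] at hp
  simp only [ge_iff_le, ← measureReal_def]
  have hρ : 0 ≤ (1 - p) / -Real.log p :=
    div_nonneg (by linarith) (neg_nonneg.2 (Real.log_nonpos hp0.le hp1.le))
  rcases le_or_gt t τ0 with htτ | hτt
  · exact (mul_le_of_le_one_right (le_min (by linarith) hρ) measureReal_le_one).trans
      ((min_le_left _ _).trans (hp ▸ one_sub_measureReal_forall_le_le_stopped_gt hVmeas htτ))
  have hpi : ∀ i, p ≤ ∏ j ∈ univ.erase i, (1 - μ.real {ω | τ0 < V j ω}) := fun i => by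
    rw [hp, hVindep.measureReal_forall_le_eq_prod hVmeas τ0]
    exact prod_le_prod_of_subset_of_le_one (erase_subset i univ)
      (fun j _ => sub_nonneg.2 measureReal_le_one)
      fun j _ _ => by linarith [measureReal_nonneg (μ := μ) (s := {ω | τ0 < V j ω})]
  calc min (1 - p) ((1 - p) / -Real.log p) * μ.real {ω | ∃ i, t < V i ω}
      ≤ (1 - p) / -Real.log p * ∑ i, μ.real {ω | t < V i ω} := by
        refine mul_le_mul (min_le_right _ _) ?_ measureReal_nonneg hρ
        simpa [Set.ofPred_exists] using
          measureReal_iUnion_fintype_le (μ := μ) fun i => {ω | t < V i ω}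
    _ ≤ ∑ i, μ.real {ω | t < V i ω} * ∫ u in (0:ℝ)..1, ∏ j ∈ univ.erase i,
          (1 - μ.real {ω | τ0 < V j ω} + μ.real {ω | τ0 < V j ω} * u) := by
        rw [mul_sum]
        refine sum_le_sum fun i _ => ?_
        rw [mul_comm]
        exact mul_le_mul_of_nonneg_left
          (div_neg_log_le_integral_prod (fun j _ => measureReal_le_one) hp0 hp1.ne (hpi i))
          measureReal_nonneg
    _ ≤ _ := sum_measureReal_mul_integral_le_stopped_gt hVmeas hVindep hσmeas hσunif hindep hτt

theorem stmt11 {Ω : Type*} [MeasurableSpace Ω] (μ : Measure Ω) [IsProbabilityMeasure μ]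
    (n : ℕ) (hn : 0 < n) (V : Fin n → Ω → ℝ)
    (hVmeas : ∀ i, Measurable (V i))
    (hVnonneg : ∀ i ω, 0 ≤ V i ω)
    (hVcont : ∀ i, Continuous (fun t => (μ {ω | V i ω ≤ t}).toReal))
    (hVindep : iIndepFun V μ)
    (σ : Ω → Equiv.Perm (Fin n))
    (hσmeas : ∀ π, MeasurableSet {ω | σ ω = π})
    (hσunif : ∀ π, μ {ω | σ ω = π} = ((n.factorial : ENNReal))⁻¹)
    (hindep : ∀ (π : Equiv.Perm (Fin n)) (A : Set (Fin n → ℝ)), MeasurableSet A →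
      μ ({ω | σ ω = π} ∩ {ω | (fun i => V i ω) ∈ A})
        = μ {ω | σ ω = π} * μ {ω | (fun i => V i ω) ∈ A})
    (τ0 : ℝ)
    (p : ℝ) (hp : p = (μ {ω | ∀ i, V i ω ≤ τ0}).toReal) (hp0 : 0 < p) (hp1 : p < 1) :
    ∀ t : ℝ, 0 ≤ t →
      (μ {ω | ∃ j : Fin n, (j : ℕ) + 1 = stopT V (fun _ => τ0) σ ω
            ∧ t < V (σ ω j) ω}).toReal
        ≥ min (1 - p) ((1 - p) / (-Real.log p)) * (μ {ω | ∃ i, t < V i ω}).toReal :=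
  stmt11_general μ n V hVmeas hVindep σ hσmeas hσunif hindep τ0 p hp hp0 hp1
end

section
/- Let V₁,...,V_n be independent nonnegative random variables, σ a uniform random permutation independent of the values, ∞ = τ₀ ≥ τ₁ ≥ ... ≥ τ_n ≥ τ_{n+1} = -∞ nonincreasing thresholds, and T = min{i : V_{σ(i)} > τ_i}. Then for every j ∈ [n+1] and every t ∈ [τ_j, τ_{j-1}), P(V_{σ(T)} > t) = P(T ≤ j-1) + Σ_{i∈[n]} P(V_i > t) · (1/n) · Σ_{k=j}^{n} P(T ≥ k | σ(k) = i). -/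
/-!
Split according to the time `T` at which the gambler stops. Stopping before time `j` always
yields a value above `t`, because the thresholds `τ 1, …, τ (j-1)` all exceed `t`. From time `j`
on every threshold is at most `t`, so the gambler stops at time `k ≥ j` with a value above `t`
exactly when he is still active at `k` and the value `V i`, `i = σ k`, revealed then exceeds `t`.
On `{σ = π}` being active at `k` is a box condition on the values revealed before `k`, none of
which is `V i`; hence `{T ≥ k, σ k = i}` is independent of `V i`, and `P(σ k = i) = 1/n`.
-/

open MeasureTheory ProbabilityTheory

section Fiber

variable {Ω α : Type*} [MeasurableSpace Ω] {μ : Measure Ω} {σ : Ω → α}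

theorem measurableSet_setOf_comp [Countable α] (hσ : ∀ a, MeasurableSet {ω | σ ω = a})
    (P : α → Prop) : MeasurableSet {ω | P (σ ω)} := by
  have : {ω | P (σ ω)} = ⋃ a ∈ {a | P a}, {ω | σ ω = a} := by ext; simp
  rw [this]
  exact .biUnion (Set.to_countable _) fun a _ => hσ a

theorem measurableSet_of_measurableSet_fiber_inter [Countable α] {X : Set Ω}
    (h : ∀ a, MeasurableSet ({ω | σ ω = a} ∩ X)) : MeasurableSet X := by
  have : X = ⋃ a, {ω | σ ω = a} ∩ X := by ext; simp
  rw [this]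
  exact .iUnion h

variable [Fintype α]

theorem measure_eq_sum_measure_fiber_inter (hσ : ∀ a, MeasurableSet {ω | σ ω = a})
    (X : Set Ω) : μ X = ∑ a, μ ({ω | σ ω = a} ∩ X) := by
  have := sum_measure_preimage_singleton (μ := μ.restrict X) Finset.univ fun a _ => hσ a
  rw [Finset.coe_univ, Set.preimage_univ, Measure.restrict_apply_univ] at this
  rw [← this]
  exact Finset.sum_congr rfl fun a _ => Measure.restrict_apply (hσ a)

theorem measure_inter_eq_mul_of_fiber (hσ : ∀ a, MeasurableSet {ω | σ ω = a}) {X Y : Set Ω}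
    (h : ∀ a, μ ({ω | σ ω = a} ∩ X ∩ Y) = μ ({ω | σ ω = a} ∩ X) * μ Y) :
    μ (X ∩ Y) = μ X * μ Y := by
  rw [measure_eq_sum_measure_fiber_inter hσ, measure_eq_sum_measure_fiber_inter hσ X,
    Finset.sum_mul]
  simp_rw [← Set.inter_assoc, h]

end Fiber

theorem measure_perm_apply_eq {Ω α : Type*} [MeasurableSpace Ω] [Fintype α] [DecidableEq α]
    {μ : Measure Ω} [IsProbabilityMeasure μ] {σ : Ω → Equiv.Perm α}
    (hσ : ∀ π, MeasurableSet {ω | σ ω = π})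
    (hunif : ∀ π π', μ {ω | σ ω = π} = μ {ω | σ ω = π'}) (a b : α) :
    μ {ω | σ ω a = b} = (Fintype.card α : ENNReal)⁻¹ := by
  have hfiber : ∀ b, μ {ω | σ ω a = b} = ∑ π, if π a = b then μ {ω | σ ω = π} else 0 := by
    intro b
    rw [measure_eq_sum_measure_fiber_inter hσ]
    refine Finset.sum_congr rfl fun π _ => ?_
    split_ifs with h
    · congr 1; ext ω; simp +contextual [h]
    · convert measure_empty (μ := μ); ext ω; simp +contextual [h]
  -- left multiplication by a transposition carries the permutations sending `a` to `b`
  -- onto those sending `a` to `b'`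
  have hsymm : ∀ b', μ {ω | σ ω a = b'} = μ {ω | σ ω a = b} := by
    intro b'
    rw [hfiber, hfiber, ← Equiv.sum_comp (Equiv.mulLeft (Equiv.swap b b'))]
    refine Finset.sum_congr rfl fun π _ => ?_
    simp [hunif _ π, Equiv.swap_apply_eq_iff]
  have htotal : ∑ b', μ {ω | σ ω a = b'} = 1 := by
    have := measure_eq_sum_measure_fiber_inter (μ := μ) (σ := fun ω => σ ω a)
      (fun b' => measurableSet_setOf_comp hσ fun π => π a = b') Set.univ
    simpa using this.symm
  refine ENNReal.eq_inv_of_mul_eq_one_left ?_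
  rw [← htotal, Finset.sum_congr rfl fun b' _ => hsymm b', Finset.sum_const, Finset.card_univ,
    nsmul_eq_mul, mul_comm]

theorem measure_setOf_exists_succ_eq {Ω : Type*} [MeasurableSpace Ω] {μ : Measure Ω}
    [IsProbabilityMeasure μ] {n : ℕ} {σ : Ω → Equiv.Perm (Fin n)}
    (hσ : ∀ π, MeasurableSet {ω | σ ω = π})
    (hunif : ∀ π π', μ {ω | σ ω = π} = μ {ω | σ ω = π'}) {k : ℕ} (hk1 : 1 ≤ k) (hkn : k ≤ n)
    (i : Fin n) :
    μ {ω | ∃ m : Fin n, (m : ℕ) + 1 = k ∧ σ ω m = i} = (n : ENNReal)⁻¹ := by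
  have hset : {ω | ∃ m : Fin n, (m : ℕ) + 1 = k ∧ σ ω m = i}
      = {ω | σ ω ⟨k - 1, by omega⟩ = i} := by
    ext ω
    refine ⟨fun ⟨m, hm, hi⟩ => ?_, fun hi => ⟨_, by dsimp only; omega, hi⟩⟩
    rwa [show m = ⟨k - 1, by omega⟩ from Fin.ext (by dsimp only; omega)] at hi
  rw [hset, measure_perm_apply_eq hσ hunif, Fintype.card_fin]

theorem ProbabilityTheory.iIndepFun.measure_univ_pi_inter_preimage_eq_mul {Ω ι β : Type*}
    [MeasurableSpace Ω] [Fintype ι] [DecidableEq ι] [MeasurableSpace β] {μ : Measure Ω}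
    [IsProbabilityMeasure μ]
    {V : ι → Ω → β} (hV : iIndepFun V μ) {S : ι → Set β} (hS : ∀ l, MeasurableSet (S l))
    {i : ι} (hSi : S i = Set.univ) {B : Set β} (hB : MeasurableSet B) :
    μ ({ω | (fun l => V l ω) ∈ Set.univ.pi S} ∩ V i ⁻¹' B)
      = μ {ω | (fun l => V l ω) ∈ Set.univ.pi S} * μ (V i ⁻¹' B) := by
  have hprod : ∀ T : ι → Set β, (∀ l, MeasurableSet (T l)) →
      μ {ω | (fun l => V l ω) ∈ Set.univ.pi T} = ∏ l, μ (V l ⁻¹' T l) := by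
    intro T hT
    rw [← hV.measure_inter_preimage_eq_mul Finset.univ fun l _ => hT l]
    congr 1
    ext ω
    simp
  have hupdate : {ω | (fun l => V l ω) ∈ Set.univ.pi S} ∩ V i ⁻¹' B
      = {ω | (fun l => V l ω) ∈ Set.univ.pi (Function.update S i B)} := by
    ext ω
    simp only [Set.mem_inter_iff, Set.mem_ofPred_eq, Set.mem_univ_pi, Set.mem_preimage]
    constructor
    · rintro ⟨hS, hB⟩ l
      rcases eq_or_ne l i with rfl | hl
      · simpa using hB
      · simpa [hl] using hS l
    · intro h
      refine ⟨fun l => ?_, by simpa using h i⟩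
      rcases eq_or_ne l i with rfl | hl
      · simp [hSi]
      · simpa [hl] using h l
  have hB' : (fun l => μ (V l ⁻¹' Function.update S i B l))
      = Function.update (fun l => μ (V l ⁻¹' S l)) i (μ (V i ⁻¹' B)) := by
    ext l
    rcases eq_or_ne l i with rfl | hl
    · simp
    · simp [hl]
  have hmeas : ∀ l, MeasurableSet (Function.update S i B l) := by
    intro l
    rcases eq_or_ne l i with rfl | hl
    · simpa using hB
    · simpa [hl] using hS l
  rw [hupdate, hprod _ hmeas, hB', Finset.prod_update_of_mem (Finset.mem_univ i), hprod S hS,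
    Finset.prod_eq_mul_prod_sdiff_singleton_of_mem (Finset.mem_univ i), hSi, Set.preimage_univ,
    measure_univ, one_mul, mul_comm]

section StoppingTime

variable {Ω : Type*} {n : ℕ} (V : Fin n → Ω → ℝ) (τ : ℕ → ℝ) (σ : Ω → Equiv.Perm (Fin n))
  (ω : Ω)

theorem stopT_mem :
    stopT V τ σ ω ∈ {k : ℕ | ∃ j : Fin n, (j : ℕ) + 1 = k ∧ τ k < V (σ ω j) ω} ∪ {n + 1} :=
  Nat.sInf_mem ⟨n + 1, Or.inr rfl⟩

theorem one_le_stopT : 1 ≤ stopT V τ σ ω := by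
  rcases stopT_mem V τ σ ω with ⟨m, hm, -⟩ | hT
  · omega
  · rw [Set.mem_singleton_iff.mp hT]
    omega

theorem exists_lt_of_stopT_le (h : stopT V τ σ ω ≤ n) :
    ∃ m : Fin n, (m : ℕ) + 1 = stopT V τ σ ω ∧ τ (stopT V τ σ ω) < V (σ ω m) ω := by
  rcases stopT_mem V τ σ ω with hT | hT
  · exact hT
  · rw [Set.mem_singleton_iff.mp hT] at h
    omega

theorem stopT_le_of_lt {m : Fin n} (h : τ ((m : ℕ) + 1) < V (σ ω m) ω) :
    stopT V τ σ ω ≤ (m : ℕ) + 1 :=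
  Nat.sInf_le (Or.inl ⟨m, rfl, h⟩)

theorem le_stopT_iff {k : ℕ} (hk : k ≤ n + 1) :
    k ≤ stopT V τ σ ω ↔ ∀ m : Fin n, (m : ℕ) + 1 < k → V (σ ω m) ω ≤ τ ((m : ℕ) + 1) := by
  refine ⟨fun h m hm => not_lt.mp fun hlt => ?_, fun h => le_csInf ⟨n + 1, Or.inr rfl⟩ ?_⟩
  · have := stopT_le_of_lt V τ σ ω hlt
    omega
  · rintro _ (⟨m, rfl, hlt⟩ | rfl)
    · exact not_lt.mp fun hm => (h m hm).not_gt hlt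
    · exact hk

/-- The value vectors that, revealed in the order `π`, do not stop the gambler before time `k`;
`l` is revealed at time `π⁻¹ l + 1`. -/
def notStoppedBox (π : Equiv.Perm (Fin n)) (k : ℕ) (l : Fin n) : Set ℝ :=
  if (π.symm l : ℕ) + 1 < k then Set.Iic (τ ((π.symm l : ℕ) + 1)) else Set.univ

theorem measurableSet_notStoppedBox (π : Equiv.Perm (Fin n)) (k : ℕ) (l : Fin n) :
    MeasurableSet (notStoppedBox τ π k l) := by
  unfold notStoppedBox
  split_ifs
  exacts [measurableSet_Iic, .univ]

theorem notStoppedBox_apply_self (π : Equiv.Perm (Fin n)) (m : Fin n) :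
    notStoppedBox τ π ((m : ℕ) + 1) (π m) = Set.univ := by
  simp [notStoppedBox]

theorem le_stopT_iff_mem_pi {k : ℕ} (hk : k ≤ n + 1) {π : Equiv.Perm (Fin n)} (hσ : σ ω = π) :
    k ≤ stopT V τ σ ω ↔ (fun l => V l ω) ∈ Set.univ.pi (notStoppedBox τ π k) := by
  rw [le_stopT_iff V τ σ ω hk, Set.mem_univ_pi,
    ← π.forall_congr_right (q := fun l => V l ω ∈ notStoppedBox τ π k l), hσ]
  refine forall_congr' fun m => ?_
  by_cases hm : (m : ℕ) + 1 < k <;> simp [notStoppedBox, hm]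

end StoppingTime
section Events

variable {Ω : Type*} {n : ℕ} {V : Fin n → Ω → ℝ} {τ : ℕ → ℝ} {σ : Ω → Equiv.Perm (Fin n)}

theorem stopT_eq_of_mem {k : ℕ} {i : Fin n} {t : ℝ} (hτk : τ k ≤ t) {ω : Ω}
    (hω : ω ∈ {ω | k ≤ stopT V τ σ ω} ∩ {ω | ∃ m : Fin n, (m : ℕ) + 1 = k ∧ σ ω m = i}
      ∩ {ω | t < V i ω}) :
    stopT V τ σ ω = k := by
  obtain ⟨⟨hle, m, rfl, rfl⟩, hlt⟩ := hω
  exact le_antisymm (stopT_le_of_lt V τ σ ω (hτk.trans_lt hlt)) hle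

theorem setOf_lt_stopT_value_eq_union {j : ℕ} {t : ℝ} (hjn : j ≤ n + 1)
    (hstop : ∀ k ∈ Finset.Icc j n, τ k ≤ t) (hcont : ∀ k, 1 ≤ k → k < j → t < τ k) :
    {ω | ∃ m : Fin n, (m : ℕ) + 1 = stopT V τ σ ω ∧ t < V (σ ω m) ω}
      = {ω | stopT V τ σ ω ≤ j - 1} ∪ ⋃ p ∈ Finset.Icc j n ×ˢ Finset.univ,
        {ω | p.1 ≤ stopT V τ σ ω} ∩ {ω | ∃ m : Fin n, (m : ℕ) + 1 = p.1 ∧ σ ω m = p.2}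
          ∩ {ω | t < V p.2 ω} := by
  ext ω
  have hT := one_le_stopT V τ σ ω
  simp only [Set.mem_union, Set.mem_iUnion, Set.mem_inter_iff, Set.mem_ofPred_eq,
    Finset.mem_product, Finset.mem_Icc, Finset.mem_univ, and_true, exists_prop, Prod.exists]
  constructor
  · rintro ⟨m, hm, hlt⟩
    by_cases hj : stopT V τ σ ω ≤ j - 1
    · exact Or.inl hj
    · exact Or.inr ⟨_, σ ω m, ⟨by omega, by omega⟩, ⟨le_rfl, m, hm, rfl⟩, hlt⟩
  · rintro (hj | ⟨k, i, ⟨hjk, hkn⟩, hω⟩)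
    · obtain ⟨m, hm, hlt⟩ := exists_lt_of_stopT_le V τ σ ω (by omega)
      exact ⟨m, hm, (hcont _ hT (by omega)).trans hlt⟩
    · have hTk := stopT_eq_of_mem (hstop k (Finset.mem_Icc.mpr ⟨hjk, hkn⟩)) hω
      obtain ⟨⟨-, m, hm, rfl⟩, hlt⟩ := hω
      exact ⟨m, hm.trans hTk.symm, hlt⟩

end Events

section Measure

variable {Ω : Type*} [MeasurableSpace Ω] {μ : Measure Ω} {n : ℕ} {V : Fin n → Ω → ℝ}
  {τ : ℕ → ℝ} {σ : Ω → Equiv.Perm (Fin n)}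

theorem measurableSet_le_stopT (hVmeas : ∀ i, Measurable (V i))
    (hσmeas : ∀ π, MeasurableSet {ω | σ ω = π}) {k : ℕ} (hk : k ≤ n + 1) :
    MeasurableSet {ω | k ≤ stopT V τ σ ω} := by
  refine measurableSet_of_measurableSet_fiber_inter (σ := σ) fun π => ?_
  have hfiber : {ω | σ ω = π} ∩ {ω | k ≤ stopT V τ σ ω}
      = {ω | σ ω = π} ∩ (fun ω l => V l ω) ⁻¹' Set.univ.pi (notStoppedBox τ π k) := by
    ext ω
    simp +contextual [le_stopT_iff_mem_pi V τ σ ω hk]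
  rw [hfiber]
  exact (hσmeas π).inter <| measurable_pi_lambda _ hVmeas
    (.univ_pi (measurableSet_notStoppedBox τ π k))

theorem measure_le_stopT_inter_lt_eq_mul [IsProbabilityMeasure μ] (hVindep : iIndepFun V μ)
    (hσmeas : ∀ π, MeasurableSet {ω | σ ω = π})
    (hindep : ∀ (π : Equiv.Perm (Fin n)) (A : Set (Fin n → ℝ)), MeasurableSet A →
      μ ({ω | σ ω = π} ∩ {ω | (fun i => V i ω) ∈ A})
        = μ {ω | σ ω = π} * μ {ω | (fun i => V i ω) ∈ A})
    (k : ℕ) (i : Fin n) (t : ℝ) :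
    μ ({ω | k ≤ stopT V τ σ ω} ∩ {ω | ∃ m : Fin n, (m : ℕ) + 1 = k ∧ σ ω m = i}
        ∩ {ω | t < V i ω})
      = μ ({ω | k ≤ stopT V τ σ ω} ∩ {ω | ∃ m : Fin n, (m : ℕ) + 1 = k ∧ σ ω m = i})
        * μ {ω | t < V i ω} := by
  refine measure_inter_eq_mul_of_fiber hσmeas fun π => ?_
  by_cases hπ : ∃ m : Fin n, (m : ℕ) + 1 = k ∧ π m = i
  · obtain ⟨m, rfl, rfl⟩ := hπ
    have hT : ∀ ω, σ ω = π → ((m : ℕ) + 1 ≤ stopT V τ σ ω ↔ _) :=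
      fun ω => le_stopT_iff_mem_pi V τ σ ω (by omega)
    have hfiber : {ω | σ ω = π} ∩ ({ω | (m : ℕ) + 1 ≤ stopT V τ σ ω}
          ∩ {ω | ∃ m' : Fin n, (m' : ℕ) + 1 = (m : ℕ) + 1 ∧ σ ω m' = π m})
        = {ω | σ ω = π} ∩ {ω | (fun l => V l ω) ∈ Set.univ.pi (notStoppedBox τ π (m + 1))} := by
      ext ω
      exact ⟨fun ⟨hσ, hle, _⟩ => ⟨hσ, (hT ω hσ).mp hle⟩,
        fun ⟨hσ, hV⟩ => ⟨hσ, (hT ω hσ).mpr hV, m, rfl, by rw [hσ]⟩⟩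
    have hbox := measurableSet_notStoppedBox τ π ((m : ℕ) + 1)
    have hlt : MeasurableSet {x : Fin n → ℝ | t < x (π m)} :=
      measurableSet_lt measurable_const (measurable_pi_apply (π m))
    have hvec : {ω | (fun l => V l ω) ∈ Set.univ.pi (notStoppedBox τ π (m + 1))}
          ∩ {ω | t < V (π m) ω}
        = {ω | (fun l => V l ω) ∈ Set.univ.pi (notStoppedBox τ π (m + 1))
          ∩ {x | t < x (π m)}} := rfl
    rw [hfiber, Set.inter_assoc, hvec, hindep π _ ((MeasurableSet.univ_pi hbox).inter hlt),
      ← hvec, hindep π _ (.univ_pi hbox), mul_assoc]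
    congr 1
    exact hVindep.measure_univ_pi_inter_preimage_eq_mul hbox (notStoppedBox_apply_self τ π m)
      measurableSet_Ioi
  · have hempty : {ω | σ ω = π} ∩ ({ω | k ≤ stopT V τ σ ω}
        ∩ {ω | ∃ m : Fin n, (m : ℕ) + 1 = k ∧ σ ω m = i}) = ∅ := by
      ext ω
      simp only [Set.mem_inter_iff, Set.mem_empty_iff_false, iff_false]
      rintro ⟨rfl, -, hm⟩
      exact hπ hm
    rw [hempty, Set.empty_inter, measure_empty, zero_mul]

theorem measure_setOf_lt_stopT_value_eq (hVmeas : ∀ i, Measurable (V i))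
    (hσmeas : ∀ π, MeasurableSet {ω | σ ω = π}) {j : ℕ} {t : ℝ} (hjn : j ≤ n + 1)
    (hstop : ∀ k ∈ Finset.Icc j n, τ k ≤ t) (hcont : ∀ k, 1 ≤ k → k < j → t < τ k) :
    μ {ω | ∃ m : Fin n, (m : ℕ) + 1 = stopT V τ σ ω ∧ t < V (σ ω m) ω}
      = μ {ω | stopT V τ σ ω ≤ j - 1} + ∑ k ∈ Finset.Icc j n, ∑ i : Fin n,
        μ ({ω | k ≤ stopT V τ σ ω} ∩ {ω | ∃ m : Fin n, (m : ℕ) + 1 = k ∧ σ ω m = i}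
          ∩ {ω | t < V i ω}) := by
  have hmeas : ∀ p ∈ Finset.Icc j n ×ˢ Finset.univ, MeasurableSet
      ({ω | p.1 ≤ stopT V τ σ ω} ∩ {ω | ∃ m : Fin n, (m : ℕ) + 1 = p.1 ∧ σ ω m = p.2}
        ∩ {ω | t < V p.2 ω}) := by
    rintro ⟨k, i⟩ hp
    have hkn : k ≤ n := (Finset.mem_Icc.mp (Finset.mem_product.mp hp).1).2
    exact ((measurableSet_le_stopT hVmeas hσmeas (by omega : k ≤ n + 1)).inter
      (measurableSet_setOf_comp hσmeas fun π => ∃ m : Fin n, (m : ℕ) + 1 = k ∧ π m = i)).inter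
      (measurableSet_lt measurable_const (hVmeas i))
  have hstopT : ∀ p ∈ Finset.Icc j n ×ˢ Finset.univ, ∀ ω ∈ {ω | p.1 ≤ stopT V τ σ ω}
      ∩ {ω | ∃ m : Fin n, (m : ℕ) + 1 = p.1 ∧ σ ω m = p.2} ∩ {ω | t < V p.2 ω},
      stopT V τ σ ω = p.1 :=
    fun p hp _ => stopT_eq_of_mem (hstop p.1 (Finset.mem_product.mp hp).1)
  rw [setOf_lt_stopT_value_eq_union hjn hstop hcont, measure_union _
    (Finset.measurableSet_biUnion _ hmeas), measure_biUnion_finset _ hmeas, Finset.sum_product]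
  · rintro ⟨k, i⟩ hp ⟨k', i'⟩ hp' hne
    refine Set.disjoint_left.mpr fun ω hω hω' => hne ?_
    have hk : k = k' := (hstopT _ hp ω hω).symm.trans (hstopT _ hp' ω hω')
    obtain ⟨⟨-, m, hm, rfl⟩, -⟩ := hω
    obtain ⟨⟨-, m', hm', rfl⟩, -⟩ := hω'
    rw [hk, show m = m' from Fin.ext (by omega)]
  · refine Set.disjoint_left.mpr fun ω hA hω => ?_
    simp only [Set.mem_iUnion, exists_prop] at hω
    obtain ⟨p, hp, hω⟩ := hω
    have hT := hstopT p hp ω hω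
    have hjk := (Finset.mem_Icc.mp (Finset.mem_product.mp hp).1).1
    have hT1 := one_le_stopT V τ σ ω
    simp only [Set.mem_ofPred_eq] at hA
    omega

end Measure

theorem stmt13_general {Ω : Type*} [MeasurableSpace Ω] (μ : Measure Ω) [IsProbabilityMeasure μ]
    (n : ℕ) (V : Fin n → Ω → ℝ)
    (hVmeas : ∀ i, Measurable (V i))
    (hVindep : iIndepFun V μ)
    (σ : Ω → Equiv.Perm (Fin n))
    (hσmeas : ∀ π, MeasurableSet {ω | σ ω = π})
    (hσunif : ∀ π, μ {ω | σ ω = π} = ((n.factorial : ENNReal))⁻¹)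
    (hindep : ∀ (π : Equiv.Perm (Fin n)) (A : Set (Fin n → ℝ)), MeasurableSet A →
      μ ({ω | σ ω = π} ∩ {ω | (fun i => V i ω) ∈ A})
        = μ {ω | σ ω = π} * μ {ω | (fun i => V i ω) ∈ A})
    (τ : ℕ → ℝ)
    (hτ : ∀ k, 1 ≤ k → k < n → τ (k + 1) ≤ τ k)
    (j : ℕ) (hj1 : 1 ≤ j) (hjn : j ≤ n + 1)
    (t : ℝ)
    -- t ∈ [τ_j, τ_{j-1}), with the conventions τ₀ = ∞ and τ_{n+1} = -∞
    (ht1 : j ≤ n → τ j ≤ t) (ht2 : 2 ≤ j → t < τ (j - 1)) :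
    (μ {ω | ∃ jj : Fin n, (jj : ℕ) + 1 = stopT V τ σ ω ∧ t < V (σ ω jj) ω}).toReal
      = (μ {ω | stopT V τ σ ω ≤ j - 1}).toReal
        + ∑ i : Fin n, (μ {ω | t < V i ω}).toReal *
            ((1 / n : ℝ) * ∑ k ∈ Finset.Icc j n,
              (μ ({ω | k ≤ stopT V τ σ ω}
                    ∩ {ω | ∃ jj : Fin n, (jj : ℕ) + 1 = k ∧ σ ω jj = i})).toReal
                / (μ {ω | ∃ jj : Fin n, (jj : ℕ) + 1 = k ∧ σ ω jj = i}).toReal) := by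
  have hσunif' : ∀ π π', μ {ω | σ ω = π} = μ {ω | σ ω = π'} := fun π π' =>
    (hσunif π).trans (hσunif π').symm
  have hanti : AntitoneOn τ (Set.Icc 1 n) :=
    antitoneOn_of_add_one_le Set.ordConnected_Icc fun k _ hk hk' => hτ k hk.1 hk'.2
  have hstop : ∀ k ∈ Finset.Icc j n, τ k ≤ t := fun k hk =>
    have ⟨hjk, hkn⟩ := Finset.mem_Icc.mp hk
    (hanti ⟨hj1, hjk.trans hkn⟩ ⟨hj1.trans hjk, hkn⟩ hjk).trans (ht1 (hjk.trans hkn))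
  have hcont : ∀ k, 1 ≤ k → k < j → t < τ k := fun k hk hkj =>
    (ht2 (by omega)).trans_le (hanti ⟨hk, by omega⟩ ⟨by omega, by omega⟩ (by omega))
  rw [measure_setOf_lt_stopT_value_eq hVmeas hσmeas hjn hstop hcont]
  simp_rw [measure_le_stopT_inter_lt_eq_mul hVindep hσmeas hindep]
  have hfin : ∀ k i, μ ({ω | k ≤ stopT V τ σ ω}
      ∩ {ω | ∃ m : Fin n, (m : ℕ) + 1 = k ∧ σ ω m = i}) * μ {ω | t < V i ω} ≠ ⊤ :=
    fun _ _ => ENNReal.mul_ne_top (measure_ne_top _ _) (measure_ne_top _ _)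
  rw [ENNReal.toReal_add (measure_ne_top _ _)
      (ENNReal.sum_ne_top.mpr fun _ _ => ENNReal.sum_ne_top.mpr fun _ _ => hfin _ _),
    ENNReal.toReal_sum fun _ _ => ENNReal.sum_ne_top.mpr fun _ _ => hfin _ _]
  simp_rw [ENNReal.toReal_sum fun _ _ => hfin _ _]
  rw [Finset.sum_comm]
  refine congrArg _ (Finset.sum_congr rfl fun i _ => ?_)
  rw [Finset.mul_sum, Finset.mul_sum]
  refine Finset.sum_congr rfl fun k hk => ?_
  obtain ⟨hjk, hkn⟩ := Finset.mem_Icc.mp hk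
  rw [measure_setOf_exists_succ_eq hσmeas hσunif' (hj1.trans hjk) hkn i, ENNReal.toReal_mul,
    ENNReal.toReal_inv, ENNReal.toReal_natCast]
  have : (n : ℝ) ≠ 0 := by norm_cast; omega
  field_simp

theorem stmt13 {Ω : Type*} [MeasurableSpace Ω] (μ : Measure Ω) [IsProbabilityMeasure μ]
    (n : ℕ) (hn : 0 < n) (V : Fin n → Ω → ℝ)
    (hVmeas : ∀ i, Measurable (V i))
    (hVnonneg : ∀ i ω, 0 ≤ V i ω)
    (hVindep : iIndepFun V μ)
    (σ : Ω → Equiv.Perm (Fin n))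
    (hσmeas : ∀ π, MeasurableSet {ω | σ ω = π})
    (hσunif : ∀ π, μ {ω | σ ω = π} = ((n.factorial : ENNReal))⁻¹)
    (hindep : ∀ (π : Equiv.Perm (Fin n)) (A : Set (Fin n → ℝ)), MeasurableSet A →
      μ ({ω | σ ω = π} ∩ {ω | (fun i => V i ω) ∈ A})
        = μ {ω | σ ω = π} * μ {ω | (fun i => V i ω) ∈ A})
    (τ : ℕ → ℝ)
    (hτ : ∀ k, 1 ≤ k → k < n → τ (k + 1) ≤ τ k)
    (j : ℕ) (hj1 : 1 ≤ j) (hjn : j ≤ n + 1)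
    (t : ℝ)
    -- t ∈ [τ_j, τ_{j-1}), with the conventions τ₀ = ∞ and τ_{n+1} = -∞
    (ht1 : j ≤ n → τ j ≤ t) (ht2 : 2 ≤ j → t < τ (j - 1)) :
    (μ {ω | ∃ jj : Fin n, (jj : ℕ) + 1 = stopT V τ σ ω ∧ t < V (σ ω jj) ω}).toReal
      = (μ {ω | stopT V τ σ ω ≤ j - 1}).toReal
        + ∑ i : Fin n, (μ {ω | t < V i ω}).toReal *
            ((1 / n : ℝ) * ∑ k ∈ Finset.Icc j n,
              (μ ({ω | k ≤ stopT V τ σ ω}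
                    ∩ {ω | ∃ jj : Fin n, (jj : ℕ) + 1 = k ∧ σ ω jj = i})).toReal
                / (μ {ω | ∃ jj : Fin n, (jj : ℕ) + 1 = k ∧ σ ω jj = i}).toReal) :=
  stmt13_general μ n V hVmeas hVindep σ hσmeas hσunif hindep τ hτ j hj1 hjn t ht1 ht2
end

section
/- Let V₁,...,V_n be independent random variables, σ a uniform random permutation independent of the values, τ₁ ≥ ... ≥ τ_n nonincreasing thresholds, and T the stopping time of TTA. Then for all i, k ∈ [n], P(T ≥ k | σ(k) = i) ≥ P(T > k) / (1 - k/n + (1/n)·Σ_{l∈[k]} P(V_i ≤ τ_l)). -/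
open MeasureTheory ProbabilityTheory

/-!
Given `σ = π`, the values are independent of `σ` and of each other, so
`P(T > m | σ = π) = P_m(π) := ∏_{j ≤ m} F_{π(j)}(τ_j)`. Every probability in the claim is thus
`1/n!` times a sum of such products over permutations, `P(σ(k) = i) = 1/n`, and the claim
reduces to `∑_π P_k(π) ≤ (n - k + ∑_{l ≤ k} F_i(τ_l)) · ∑_{π(k) = i} P_{k-1}(π)`.
Split the left side by the position `q` of `i`. For `q ≤ k`, precomposing with the cycle
`k ↦ q`, `j ↦ j + 1` (`q ≤ j < k`) maps `{π(q) = i}` onto `{π(k) = i}`; it reveals each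
value after `q` one step earlier, against a larger threshold, so the product only grows,
up to the factor `F_i(τ_q)` of `i` itself. For `q > k`, the transposition of `q` and `k`
does the same, dropping a factor at most `1`.
-/
open Finset Equiv

lemma mul_div_le_mul_div_of_le_sub_add_mul {n k S c B R : ℝ} (hn : 0 < n) (hkn : k ≤ n)
    (hS : 0 ≤ S) (hc : 0 ≤ c) (hB : 0 ≤ B) (h : R ≤ (n - k + S) * B) :
    c * R / (1 - k / n + 1 / n * S) ≤ c * B / (1 / n) := by
  have hden : 1 - k / n + 1 / n * S = (n - k + S) / n := by field_simp
  rw [hden]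
  refine div_le_of_le_mul₀ (by have := sub_nonneg.2 hkn; positivity) (by positivity) ?_
  calc c * R ≤ c * ((n - k + S) * B) := mul_le_mul_of_nonneg_left h hc
    _ = _ := by field_simp

section Fibers

variable {α M : Type*} [Fintype α] [DecidableEq α] [AddCommMonoid M]

lemma sum_filter_apply_eq_mul_right (e : Perm α) (p i : α) (f : Perm α → M) :
    ∑ π ∈ univ.filter (fun π : Perm α => π (e p) = i), f (π * e)
      = ∑ π ∈ univ.filter (fun π : Perm α => π p = i), f π :=
  sum_equiv (Equiv.mulRight e) (by simp) (by simp)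

lemma sum_sum_filter_apply_eq (i : α) (f : Perm α → M) :
    ∑ q, ∑ π ∈ univ.filter (fun π : Perm α => π q = i), f π = ∑ π, f π := by
  rw [← sum_fiberwise univ (fun π : Perm α => π.symm i) f]
  refine sum_congr rfl fun q _ => sum_congr (filter_congr fun π _ => ?_) fun _ _ => rfl
  rw [Equiv.symm_apply_eq, eq_comm]

lemma card_filter_apply_eq_mul_card (p i : α) :
    #(univ.filter (fun π : Perm α => π p = i)) * Fintype.card α
      = (Fintype.card α).factorial := by
  have hfiber : ∀ q, #(univ.filter (fun π : Perm α => π q = i))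
      = #(univ.filter (fun π : Perm α => π p = i)) := fun q =>
    card_equiv (Equiv.mulRight (swap p q)) (by simp)
  have := sum_sum_filter_apply_eq i (fun _ => 1)
  simp only [sum_const, smul_eq_mul, mul_one, hfiber, card_univ, Fintype.card_perm] at this
  rw [← this, mul_comm]

end Fibers

section PrefixProd

variable {n : ℕ} (G : Fin n → ℕ → ℝ)

/-- With `G a l = P(V_a ≤ τ_l)`, this is `P(T > m | σ = π)`. -/
def prefixProd (π : Perm (Fin n)) (m : ℕ) : ℝ :=
  ∏ j ∈ univ.filter (fun j : Fin n => (j : ℕ) < m), G (π j) (j + 1)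

variable {G}

lemma filter_val_lt_succ_eq_insert (p : Fin n) :
    univ.filter (fun j : Fin n => (j : ℕ) < p + 1)
      = insert p (univ.filter (fun j : Fin n => (j : ℕ) < p)) := by
  ext j
  simp only [mem_filter, mem_univ, true_and, mem_insert, Fin.ext_iff]
  omega

lemma prefixProd_nonneg (hG0 : ∀ a m, 0 ≤ G a m) (π : Perm (Fin n)) (m : ℕ) :
    0 ≤ prefixProd G π m :=
  prod_nonneg fun _ _ => hG0 _ _

lemma prefixProd_succ_le (hG0 : ∀ a m, 0 ≤ G a m) (hG1 : ∀ a m, G a m ≤ 1)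
    (π : Perm (Fin n)) (p : Fin n) :
    prefixProd G π ((p : ℕ) + 1) ≤ prefixProd G π p := by
  rw [prefixProd, filter_val_lt_succ_eq_insert, prod_insert (by simp)]
  exact mul_le_of_le_one_left (prefixProd_nonneg hG0 π p) (hG1 _ _)

lemma prefixProd_mul_swap (π : Perm (Fin n)) (p q : Fin n) (hpq : p < q) :
    prefixProd G (π * swap p q) p = prefixProd G π p := by
  refine prod_congr rfl fun j hj => ?_
  rw [mem_filter] at hj
  rw [Perm.mul_apply, swap_apply_of_ne_of_ne] <;> (intro h; subst h; omega)

lemma prefixProd_succ_le_mul_cycleIcc (hG0 : ∀ a m, 0 ≤ G a m)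
    (hGanti : ∀ a m, 1 ≤ m → m < n → G a (m + 1) ≤ G a m)
    (π : Perm (Fin n)) {p q : Fin n} (hqp : q ≤ p) :
    prefixProd G π ((p : ℕ) + 1)
      ≤ G (π q) ((q : ℕ) + 1) * prefixProd G (π * Fin.cycleIcc q p) p := by
  have : NeZero n := NeZero.of_pos p.pos
  set c := Fin.cycleIcc q p
  have hsupp : {j | c j ≠ j} ⊆ univ.filter (fun j : Fin n => (j : ℕ) < p + 1) := by
    intro j hj
    by_contra hjp
    simp only [coe_filter, mem_univ, true_and, Set.mem_ofPred_eq, not_lt] at hj hjp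
    exact hj (Fin.cycleIcc_of_gt (by rw [Fin.lt_def]; omega))
  have hshift : ∀ j : Fin n, (j : ℕ) < p → (c j : ℕ) = j ∨ (c j : ℕ) = j + 1 := by
    intro j hj
    rcases lt_or_ge j q with hjq | hqj
    · exact .inl (by rw [Fin.cycleIcc_of_lt hjq])
    · right
      rw [Fin.cycleIcc_of_ge_of_lt hqj hj, Fin.val_add_one_of_lt' (by omega)]
  rw [prefixProd, ← c.prod_comp _ _ hsupp, filter_val_lt_succ_eq_insert, prod_insert (by simp),
    Fin.cycleIcc_of_last hqp]
  refine mul_le_mul_of_nonneg_left (prod_le_prod (fun _ _ => hG0 _ _) fun j hj => ?_) (hG0 _ _)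
  rw [mem_filter] at hj
  rcases hshift j hj.2 with h | h
  · rw [Perm.mul_apply, h]
  · rw [Perm.mul_apply, h]
    exact hGanti _ _ (by omega) (by omega)

lemma sum_fin_ite_lt_eq_sub_add_sum_Icc (k : ℕ) (hkn : k ≤ n) (x : ℕ → ℝ) :
    ∑ q : Fin n, (if (q : ℕ) < k then x ((q : ℕ) + 1) else 1)
      = (n - k : ℝ) + ∑ l ∈ Icc 1 k, x l := by
  rw [Fin.sum_univ_eq_sum_range (fun q => if q < k then x (q + 1) else 1),
    ← sum_range_add_sum_Ico _ hkn, sum_congr rfl fun q hq => if_pos (mem_range.1 hq),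
    sum_congr rfl fun q hq => if_neg (not_lt.2 (mem_Ico.1 hq).1)]
  rw [sum_const, Nat.card_Ico, nsmul_one, Nat.cast_sub hkn, add_comm, range_eq_Ico,
    sum_Ico_add' x 0 k 1, zero_add, Ico_add_one_right_eq_Icc]

lemma sum_filter_prefixProd_succ_le (hG0 : ∀ a m, 0 ≤ G a m) (hG1 : ∀ a m, G a m ≤ 1)
    (hGanti : ∀ a m, 1 ≤ m → m < n → G a (m + 1) ≤ G a m) (p q i : Fin n) :
    ∑ π ∈ univ.filter (fun π : Perm (Fin n) => π q = i), prefixProd G π ((p : ℕ) + 1)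
      ≤ (if (q : ℕ) < p + 1 then G i ((q : ℕ) + 1) else 1)
        * ∑ π ∈ univ.filter (fun π : Perm (Fin n) => π p = i), prefixProd G π p := by
  split_ifs with hqp
  · have hqp : q ≤ p := Fin.le_def.2 (by omega)
    calc _ ≤ ∑ π ∈ univ.filter (fun π : Perm (Fin n) => π q = i),
          G i ((q : ℕ) + 1) * prefixProd G (π * Fin.cycleIcc q p) p :=
          sum_le_sum fun π hπ =>
            (mem_filter.1 hπ).2 ▸ prefixProd_succ_le_mul_cycleIcc hG0 hGanti π hqp
      _ = _ := by
        have : NeZero n := NeZero.of_pos p.pos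
        rw [← mul_sum, ← sum_filter_apply_eq_mul_right (Fin.cycleIcc q p) p i,
          Fin.cycleIcc_of_last hqp]
  · have hpq : p < q := Fin.lt_def.2 (by omega)
    calc _ ≤ ∑ π ∈ univ.filter (fun π : Perm (Fin n) => π q = i),
          prefixProd G (π * swap p q) p :=
          sum_le_sum fun π _ =>
            (prefixProd_mul_swap π p q hpq).symm ▸ prefixProd_succ_le hG0 hG1 π p
      _ = _ := by
        rw [one_mul, ← sum_filter_apply_eq_mul_right (swap p q) p i, swap_apply_left]

lemma sum_prefixProd_succ_le (hG0 : ∀ a m, 0 ≤ G a m) (hG1 : ∀ a m, G a m ≤ 1)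
    (hGanti : ∀ a m, 1 ≤ m → m < n → G a (m + 1) ≤ G a m) (p i : Fin n) :
    ∑ π, prefixProd G π ((p : ℕ) + 1)
      ≤ ((n : ℝ) - ((p : ℕ) + 1) + ∑ l ∈ Icc 1 ((p : ℕ) + 1), G i l)
        * ∑ π ∈ univ.filter (fun π : Perm (Fin n) => π p = i), prefixProd G π p := by
  calc ∑ π, prefixProd G π ((p : ℕ) + 1)
      = ∑ q, ∑ π ∈ univ.filter (fun π : Perm (Fin n) => π q = i),
          prefixProd G π ((p : ℕ) + 1) :=
        (sum_sum_filter_apply_eq i _).symm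
    _ ≤ ∑ q : Fin n, (if (q : ℕ) < p + 1 then G i ((q : ℕ) + 1) else 1)
          * ∑ π ∈ univ.filter (fun π : Perm (Fin n) => π p = i), prefixProd G π p :=
        sum_le_sum fun q _ => sum_filter_prefixProd_succ_le hG0 hG1 hGanti p q i
    _ = _ := by
        rw [← sum_mul, sum_fin_ite_lt_eq_sub_add_sum_Icc _ (by omega)]
        push_cast; ring

end PrefixProd

section Stopping

variable {Ω : Type*} {n : ℕ} {V : Fin n → Ω → ℝ} {τ : ℕ → ℝ}
  {σ : Ω → Perm (Fin n)}

lemma lt_stopT_iff {m : ℕ} (hm : m ≤ n) (ω : Ω) :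
    m < stopT V τ σ ω ↔ ∀ j : Fin n, (j : ℕ) < m → V (σ ω j) ω ≤ τ (j + 1) := by
  rw [stopT, Nat.lt_iff_add_one_le, le_csInf_iff (OrderBot.bddBelow _) ⟨n + 1, .inr rfl⟩]
  simp only [Set.mem_union, Set.mem_ofPred_eq, Set.mem_singleton_iff]
  constructor
  · intro h j hj
    by_contra! hlt
    have := h _ (.inl ⟨j, rfl, hlt⟩)
    omega
  · rintro h _ (⟨j, rfl, hlt⟩ | rfl)
    · by_contra! hjm
      exact (h j (by omega)).not_gt hlt
    · omega

def belowThresholds (τ : ℕ → ℝ) (π : Perm (Fin n)) (m : ℕ) : Set (Fin n → ℝ) :=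
  {v | ∀ j : Fin n, (j : ℕ) < m → v (π j) ≤ τ (j + 1)}

lemma measurableSet_belowThresholds (π : Perm (Fin n)) (m : ℕ) :
    MeasurableSet (belowThresholds τ π m) := by
  simp only [belowThresholds, Set.ofPred_forall]
  exact .iInter fun j => .iInter fun _ =>
    measurableSet_le (measurable_pi_apply _) measurable_const

lemma lt_stopT_inter_eq {m : ℕ} (hm : m ≤ n) (π : Perm (Fin n)) :
    {ω | m < stopT V τ σ ω} ∩ {ω | σ ω = π}
      = {ω | σ ω = π} ∩ {ω | (fun a => V a ω) ∈ belowThresholds τ π m} := by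
  ext ω
  simp only [Set.mem_inter_iff, Set.mem_ofPred_eq, belowThresholds]
  constructor
  · rintro ⟨h, rfl⟩
    exact ⟨rfl, (lt_stopT_iff hm ω).1 h⟩
  · rintro ⟨rfl, h⟩
    exact ⟨(lt_stopT_iff hm ω).2 h, rfl⟩

variable [MeasurableSpace Ω] {μ : Measure Ω}

lemma measureReal_belowThresholds [IsFiniteMeasure μ] (hV : iIndepFun V μ)
    (π : Perm (Fin n)) (m : ℕ) :
    μ.real {ω | (fun a => V a ω) ∈ belowThresholds τ π m}
      = prefixProd (fun a l => μ.real {ω | V a ω ≤ τ l}) π m := by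
  have h := (hV.precomp π.injective).measure_inter_preimage_eq_mul
    (univ.filter (fun j : Fin n => (j : ℕ) < m)) (sets := fun j => Set.Iic (τ (j + 1)))
    (fun _ _ => measurableSet_Iic)
  have hset : {ω | (fun a => V a ω) ∈ belowThresholds τ π m}
      = ⋂ j ∈ univ.filter (fun j : Fin n => (j : ℕ) < m),
          V (π j) ⁻¹' Set.Iic (τ (j + 1)) := by
    ext ω
    simp [belowThresholds]
  rw [measureReal_def, hset, h, ENNReal.toReal_prod]
  rfl

lemma measureReal_inter_preimage_eq_sum [IsFiniteMeasure μ]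
    (hσ : ∀ π, MeasurableSet {ω | σ ω = π}) (E : Set Ω) (s : Finset (Perm (Fin n))) :
    μ.real (E ∩ σ ⁻¹' s) = ∑ π ∈ s, μ.real (E ∩ {ω | σ ω = π}) := by
  have hs : MeasurableSet (σ ⁻¹' s) := by
    rw [← Set.biUnion_preimage_singleton]
    exact .biUnion s.countable_toSet fun π _ => hσ π
  rw [Set.inter_comm, ← measureReal_restrict_apply hs,
    ← sum_measureReal_preimage_singleton s fun π _ => hσ π]
  exact sum_congr rfl fun π _ => by
    rw [Set.inter_comm]; exact measureReal_restrict_apply (hσ π)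

lemma measureReal_preimage_eq_card_div [IsFiniteMeasure μ]
    (hσmeas : ∀ π, MeasurableSet {ω | σ ω = π})
    (hσunif : ∀ π, μ {ω | σ ω = π} = ((n.factorial : ENNReal))⁻¹)
    (s : Finset (Perm (Fin n))) :
    μ.real (σ ⁻¹' s) = #s / n.factorial := by
  rw [← sum_measureReal_preimage_singleton s fun π _ => hσmeas π]
  simp only [measureReal_def, Set.preimage, Set.mem_singleton_iff, hσunif, ENNReal.toReal_inv,
    ENNReal.toReal_natCast, sum_const, nsmul_eq_mul, div_eq_mul_inv]

lemma measureReal_preimage_filter_apply_eq [IsFiniteMeasure μ]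
    (hσmeas : ∀ π, MeasurableSet {ω | σ ω = π})
    (hσunif : ∀ π, μ {ω | σ ω = π} = ((n.factorial : ENNReal))⁻¹) (p i : Fin n) :
    μ.real (σ ⁻¹' (univ.filter fun π : Perm (Fin n) => π p = i)) = 1 / n := by
  have hcard := card_filter_apply_eq_mul_card p i
  rw [Fintype.card_fin] at hcard
  rw [measureReal_preimage_eq_card_div hσmeas hσunif, ← hcard, Nat.cast_mul,
    div_mul_cancel_left₀ (by exact_mod_cast left_ne_zero_of_mul (hcard ▸ n.factorial_ne_zero)),
    one_div]

lemma measureReal_lt_stopT_inter_preimage [IsFiniteMeasure μ] (hV : iIndepFun V μ)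
    (hσmeas : ∀ π, MeasurableSet {ω | σ ω = π})
    (hσunif : ∀ π, μ {ω | σ ω = π} = ((n.factorial : ENNReal))⁻¹)
    (hindep : ∀ (π : Perm (Fin n)) (A : Set (Fin n → ℝ)), MeasurableSet A →
      μ ({ω | σ ω = π} ∩ {ω | (fun i => V i ω) ∈ A})
        = μ {ω | σ ω = π} * μ {ω | (fun i => V i ω) ∈ A})
    {m : ℕ} (hm : m ≤ n) (s : Finset (Perm (Fin n))) :
    μ.real ({ω | m < stopT V τ σ ω} ∩ σ ⁻¹' s)
      = (n.factorial : ℝ)⁻¹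
        * ∑ π ∈ s, prefixProd (fun a l => μ.real {ω | V a ω ≤ τ l}) π m := by
  rw [measureReal_inter_preimage_eq_sum hσmeas, mul_sum]
  refine sum_congr rfl fun π _ => ?_
  rw [lt_stopT_inter_eq hm, measureReal_def, hindep π _ (measurableSet_belowThresholds π m),
    ENNReal.toReal_mul, hσunif, ENNReal.toReal_inv, ENNReal.toReal_natCast, ← measureReal_def,
    measureReal_belowThresholds hV]

end Stopping

theorem stmt14_general {Ω : Type*} [MeasurableSpace Ω] (μ : Measure Ω) [IsProbabilityMeasure μ]
    (n : ℕ) (V : Fin n → Ω → ℝ)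
    (hVindep : iIndepFun V μ)
    (σ : Ω → Equiv.Perm (Fin n))
    (hσmeas : ∀ π, MeasurableSet {ω | σ ω = π})
    (hσunif : ∀ π, μ {ω | σ ω = π} = ((n.factorial : ENNReal))⁻¹)
    (hindep : ∀ (π : Equiv.Perm (Fin n)) (A : Set (Fin n → ℝ)), MeasurableSet A →
      μ ({ω | σ ω = π} ∩ {ω | (fun i => V i ω) ∈ A})
        = μ {ω | σ ω = π} * μ {ω | (fun i => V i ω) ∈ A})
    (τ : ℕ → ℝ)
    (hτ : ∀ k, 1 ≤ k → k < n → τ (k + 1) ≤ τ k)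
    (i : Fin n) (k : ℕ) (hk1 : 1 ≤ k) (hkn : k ≤ n) :
    (μ ({ω | k ≤ stopT V τ σ ω}
          ∩ {ω | ∃ jj : Fin n, (jj : ℕ) + 1 = k ∧ σ ω jj = i})).toReal
        / (μ {ω | ∃ jj : Fin n, (jj : ℕ) + 1 = k ∧ σ ω jj = i}).toReal
      ≥ (μ {ω | k < stopT V τ σ ω}).toReal
          / (1 - (k : ℝ) / n
              + (1 / n : ℝ) * ∑ l ∈ Finset.Icc 1 k, (μ {ω | V i ω ≤ τ l}).toReal) := by
  obtain ⟨p, rfl⟩ : ∃ p : Fin n, (p : ℕ) + 1 = k :=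
    ⟨⟨k - 1, by omega⟩, Nat.sub_add_cancel hk1⟩
  set G : Fin n → ℕ → ℝ := fun a l => μ.real {ω | V a ω ≤ τ l}
  set Φ := univ.filter (fun π : Perm (Fin n) => π p = i)
  have hevent : {ω | ∃ jj : Fin n, (jj : ℕ) + 1 = p + 1 ∧ σ ω jj = i} = σ ⁻¹' Φ := by
    ext ω
    simp [Φ, Fin.val_inj]
  have hstop : μ.real ({ω | (p : ℕ) + 1 ≤ stopT V τ σ ω} ∩ σ ⁻¹' Φ)
      = (n.factorial : ℝ)⁻¹ * ∑ π ∈ Φ, prefixProd G π p :=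
    measureReal_lt_stopT_inter_preimage hVindep hσmeas hσunif hindep p.isLt.le Φ
  have hpass : μ.real {ω | (p : ℕ) + 1 < stopT V τ σ ω}
      = (n.factorial : ℝ)⁻¹ * ∑ π, prefixProd G π ((p : ℕ) + 1) := by
    rw [← measureReal_lt_stopT_inter_preimage hVindep hσmeas hσunif hindep p.isLt univ,
      coe_univ, Set.preimage_univ, Set.inter_univ]
  have hcomb := sum_prefixProd_succ_le (G := G) (fun _ _ => measureReal_nonneg)
    (fun _ _ => measureReal_le_one)
    (fun _ m h1 h2 => measureReal_mono fun ω hω => hω.trans (hτ m h1 h2)) p i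
  simp only [← measureReal_def]
  rw [hevent, hstop, measureReal_preimage_filter_apply_eq hσmeas hσunif p i, hpass, ge_iff_le]
  push_cast
  exact mul_div_le_mul_div_of_le_sub_add_mul (by exact_mod_cast p.pos) (by exact_mod_cast p.isLt)
    (sum_nonneg fun _ _ => measureReal_nonneg) (by positivity)
    (sum_nonneg fun π _ => prefixProd_nonneg (fun _ _ => measureReal_nonneg) π p) hcomb

theorem stmt14 {Ω : Type*} [MeasurableSpace Ω] (μ : Measure Ω) [IsProbabilityMeasure μ]
    (n : ℕ) (hn : 0 < n) (V : Fin n → Ω → ℝ)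
    (hVmeas : ∀ i, Measurable (V i))
    (hVindep : iIndepFun V μ)
    (σ : Ω → Equiv.Perm (Fin n))
    (hσmeas : ∀ π, MeasurableSet {ω | σ ω = π})
    (hσunif : ∀ π, μ {ω | σ ω = π} = ((n.factorial : ENNReal))⁻¹)
    (hindep : ∀ (π : Equiv.Perm (Fin n)) (A : Set (Fin n → ℝ)), MeasurableSet A →
      μ ({ω | σ ω = π} ∩ {ω | (fun i => V i ω) ∈ A})
        = μ {ω | σ ω = π} * μ {ω | (fun i => V i ω) ∈ A})
    (τ : ℕ → ℝ)
    (hτ : ∀ k, 1 ≤ k → k < n → τ (k + 1) ≤ τ k)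
    (i : Fin n) (k : ℕ) (hk1 : 1 ≤ k) (hkn : k ≤ n) :
    (μ ({ω | k ≤ stopT V τ σ ω}
          ∩ {ω | ∃ jj : Fin n, (jj : ℕ) + 1 = k ∧ σ ω jj = i})).toReal
        / (μ {ω | ∃ jj : Fin n, (jj : ℕ) + 1 = k ∧ σ ω jj = i}).toReal
      ≥ (μ {ω | k < stopT V τ σ ω}).toReal
          / (1 - (k : ℝ) / n
              + (1 / n : ℝ) * ∑ l ∈ Finset.Icc 1 k, (μ {ω | V i ω ≤ τ l}).toReal) :=
  stmt14_general μ n V hVindep σ hσmeas hσunif hindep τ hτ i k hk1 hkn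
end

section
/- Let V₁,...,V_n be independent random variables, τ₁ ≥ max{τ₂,...,τ_n} thresholds, t < τ₁, and k ≤ n/2 a positive integer. Then Σ_{i∈[n]} P(V_i > t) / (1 - (1/n)·Σ_{l∈[k]} P(V_i > τ_l)) ≥ P(max_{i∈[n]} V_i > t) / (1 - (k/n)·P(max_{i∈[n]} V_i > τ₁)). -/
/-! Under independence `P(max_i V_i > s) = 1 - ∏ i, (1 - P(V_i > s))`. For `c ≤ 1/2` and
`q_i ≤ p_i` the quotient `(1 - ∏ (1 - p_i)) / (1 - c (1 - ∏ (1 - q_i)))` is subadditive under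
merging two factors, so iterating the two-variable inequality bounds it by `∑ p_i / (1 - c q_i)`;
with `c = k/n`, `p_i = P(V_i > t)` and `q_i = P(V_i > τ₁)`, each summand is then at most the one
on the left, because `τ_l ≤ τ₁` gives `P(V_i > τ_l) ≥ P(V_i > τ₁)` for every `l ≤ k`. -/

open MeasureTheory ProbabilityTheory Finset

theorem union_div_le_add_div {c p P q Q : ℝ} (hc0 : 0 ≤ c) (hc : c ≤ 1 / 2)
    (hq0 : 0 ≤ q) (hqp : q ≤ p) (hp1 : p ≤ 1)
    (hQ0 : 0 ≤ Q) (hQP : Q ≤ P) (hP1 : P ≤ 1) :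
    (1 - (1 - p) * (1 - P)) / (1 - c * (1 - (1 - q) * (1 - Q))) ≤
      p / (1 - c * q) + P / (1 - c * Q) := by
  have hdq : 0 < 1 - c * q := by nlinarith
  have hdQ : 0 < 1 - c * Q := by nlinarith
  -- The common denominator exceeds the product of the two denominators by `c(1-c)qQ ≥ 0`,
  -- while the numerator `p + P - pP` falls short of the cross sum by `pP - c(pQ + Pq) ≥ (1-2c)pP`.
  have hden : 1 - c * (1 - (1 - q) * (1 - Q)) =
      (1 - c * q) * (1 - c * Q) + c * (1 - c) * (q * Q) := by ring
  have hexcess : 0 ≤ c * (1 - c) * (q * Q) :=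
    mul_nonneg (mul_nonneg hc0 (by linarith)) (mul_nonneg hq0 hQ0)
  have hunion : 0 ≤ 1 - (1 - p) * (1 - P) := by nlinarith
  have hcross : p * Q + P * q ≤ 2 * (p * P) := by nlinarith
  have hnum : 1 - (1 - p) * (1 - P) ≤ p * (1 - c * Q) + P * (1 - c * q) := by
    nlinarith [mul_nonneg (hq0.trans hqp) (hQ0.trans hQP)]
  have hd : 0 < 1 - c * (1 - (1 - q) * (1 - Q)) := by
    rw [hden]; exact add_pos_of_pos_of_nonneg (mul_pos hdq hdQ) hexcess
  rw [div_add_div _ _ hdq.ne' hdQ.ne', div_le_div_iff₀ hd (mul_pos hdq hdQ)]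
  nlinarith [mul_nonneg hunion hexcess, mul_nonneg (sub_nonneg.2 hnum) hd.le]

theorem one_sub_prod_div_le_sum_div {ι : Type*} {c : ℝ} (hc0 : 0 ≤ c) (hc : c ≤ 1 / 2)
    {p q : ι → ℝ} (s : Finset ι)
    (hq0 : ∀ i ∈ s, 0 ≤ q i) (hqp : ∀ i ∈ s, q i ≤ p i) (hp1 : ∀ i ∈ s, p i ≤ 1) :
    (1 - ∏ i ∈ s, (1 - p i)) / (1 - c * (1 - ∏ i ∈ s, (1 - q i))) ≤
      ∑ i ∈ s, p i / (1 - c * q i) := by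
  induction s using Finset.cons_induction with
  | empty => simp
  | cons a s ha ih =>
    simp only [mem_cons, forall_eq_or_imp] at hq0 hqp hp1
    have hprod_p_nonneg : 0 ≤ ∏ i ∈ s, (1 - p i) := prod_nonneg fun i hi => by linarith [hp1.2 i hi]
    have hprod_le : ∏ i ∈ s, (1 - p i) ≤ ∏ i ∈ s, (1 - q i) :=
      prod_le_prod (fun i hi => by linarith [hp1.2 i hi]) fun i hi => by linarith [hqp.2 i hi]
    have hprod_q_le_one : ∏ i ∈ s, (1 - q i) ≤ 1 :=
      prod_le_one (fun i hi => by linarith [hqp.2 i hi, hp1.2 i hi])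
        fun i hi => by linarith [hq0.2 i hi]
    have h2 := union_div_le_add_div hc0 hc hq0.1 hqp.1 hp1.1
      (Q := 1 - ∏ i ∈ s, (1 - q i)) (P := 1 - ∏ i ∈ s, (1 - p i))
      (by linarith) (by linarith) (by linarith)
    simp only [sub_sub_cancel] at h2
    rw [prod_cons, prod_cons, sum_cons]
    linarith [ih hq0.2 hqp.2 hp1.2]

theorem ProbabilityTheory.iIndepFun.measureReal_exists_lt {Ω ι : Type*} [MeasurableSpace Ω]
    {μ : Measure Ω} [IsProbabilityMeasure μ] [Fintype ι] {V : ι → Ω → ℝ}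
    (hV : ∀ i, Measurable (V i)) (hind : iIndepFun V μ) (s : ℝ) :
    μ.real {ω | ∃ i, s < V i ω} = 1 - ∏ i, (1 - μ.real {ω | s < V i ω}) := by
  have hcompl : {ω | ∃ i, s < V i ω} = (⋂ i, V i ⁻¹' Set.Iic s)ᶜ := by
    ext ω; simp
  have hle (i : ι) : μ.real (V i ⁻¹' Set.Iic s) = 1 - μ.real {ω | s < V i ω} := by
    have hm : MeasurableSet {ω | s < V i ω} := hV i measurableSet_Ioi
    rw [← probReal_compl_eq_one_sub hm]
    congr 1; ext ω; simp
  rw [hcompl, probReal_compl_eq_one_sub (.iInter fun i => hV i measurableSet_Iic),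
    measureReal_def, hind.meas_iInter fun i => ⟨Set.Iic s, measurableSet_Iic, rfl⟩,
    ENNReal.toReal_prod]
  simp only [← measureReal_def, hle]

theorem div_le_half_of_two_mul_le {a n : ℝ} (ha : 0 ≤ a) (h : 2 * a ≤ n) : a / n ≤ 1 / 2 := by
  have := div_le_one_of_le₀ h (by linarith)
  rw [mul_div_assoc] at this
  linarith

theorem div_one_sub_card_div_mul_le_div_one_sub_sum {ι : Type*} (s : Finset ι) {n : ℝ}
    (hs : 2 * #s ≤ n)
    {p q : ℝ} (hp : 0 ≤ p) {x : ι → ℝ} (hqx : ∀ l ∈ s, q ≤ x l) (hx1 : ∀ l ∈ s, x l ≤ 1) :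
    p / (1 - (#s / n) * q) ≤ p / (1 - (1 / n) * ∑ l ∈ s, x l) := by
  have hcard : (0 : ℝ) ≤ 2 * #s := by positivity
  have hn : 0 ≤ 1 / n := one_div_nonneg.2 (hcard.trans hs)
  have hsum_le : ∑ l ∈ s, x l ≤ #s := by simpa using sum_le_sum hx1
  have hsum_ge : #s * q ≤ ∑ l ∈ s, x l := by simpa using card_nsmul_le_sum s x q hqx
  have hhalf : 1 / n * #s ≤ 1 / 2 := by
    rw [one_div_mul_eq_div]
    exact div_le_half_of_two_mul_le (by positivity) hs
  apply div_le_div_of_nonneg_left hp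
  · nlinarith [mul_le_mul_of_nonneg_left hsum_le hn]
  · have : #s / n * q = 1 / n * (#s * q) := by ring
    nlinarith [mul_le_mul_of_nonneg_left hsum_ge hn]

theorem stmt15_general {Ω : Type*} [MeasurableSpace Ω] (μ : Measure Ω) [IsProbabilityMeasure μ]
    (n : ℕ) (V : Fin n → Ω → ℝ)
    (hVmeas : ∀ i, Measurable (V i))
    (hVindep : iIndepFun V μ)
    (τ : ℕ → ℝ)
    (hτ : ∀ l, 2 ≤ l → l ≤ n → τ l ≤ τ 1)
    (t : ℝ) (ht : t < τ 1)
    (k : ℕ) (hkn : 2 * k ≤ n) :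
    ∑ i : Fin n, (μ {ω | t < V i ω}).toReal /
        (1 - (1 / n : ℝ) * ∑ l ∈ Finset.Icc 1 k, (μ {ω | τ l < V i ω}).toReal)
      ≥ (μ {ω | ∃ i, t < V i ω}).toReal /
          (1 - ((k : ℝ) / n) * (μ {ω | ∃ i, τ 1 < V i ω}).toReal) := by
  simp only [← measureReal_def]
  rw [hVindep.measureReal_exists_lt hVmeas, hVindep.measureReal_exists_lt hVmeas]
  have hkn' : 2 * (k : ℝ) ≤ n := by exact_mod_cast hkn
  have hτk : ∀ l ∈ Icc 1 k, τ l ≤ τ 1 := by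
    intro l hl
    rw [mem_Icc] at hl
    rcases hl.1.eq_or_lt with rfl | h
    · rfl
    · exact hτ l h (by omega)
  have hc : (k : ℝ) / n ≤ 1 / 2 := div_le_half_of_two_mul_le (by positivity) hkn'
  refine (one_sub_prod_div_le_sum_div (by positivity) hc univ (fun i _ => measureReal_nonneg)
    (fun i _ => measureReal_mono fun ω hω => ht.trans hω)
    (fun i _ => measureReal_le_one)).trans (sum_le_sum fun i _ => ?_)
  have h := div_one_sub_card_div_mul_le_div_one_sub_sum (Icc 1 k) (by simpa using hkn')
    (measureReal_nonneg (s := {ω | t < V i ω}) (μ := μ))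
    (x := fun l => μ.real {ω | τ l < V i ω}) (q := μ.real {ω | τ 1 < V i ω})
    (fun l hl => measureReal_mono fun ω hω => (hτk l hl).trans_lt hω)
    (fun l _ => measureReal_le_one)
  rwa [Nat.card_Icc, add_tsub_cancel_right] at h

theorem stmt15 {Ω : Type*} [MeasurableSpace Ω] (μ : Measure Ω) [IsProbabilityMeasure μ]
    (n : ℕ) (hn : 0 < n) (V : Fin n → Ω → ℝ)
    (hVmeas : ∀ i, Measurable (V i))
    (hVindep : iIndepFun V μ)
    (τ : ℕ → ℝ)
    (hτ : ∀ l, 2 ≤ l → l ≤ n → τ l ≤ τ 1)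
    (t : ℝ) (ht : t < τ 1)
    (k : ℕ) (hk1 : 1 ≤ k) (hkn : 2 * k ≤ n) :
    ∑ i : Fin n, (μ {ω | t < V i ω}).toReal /
        (1 - (1 / n : ℝ) * ∑ l ∈ Finset.Icc 1 k, (μ {ω | τ l < V i ω}).toReal)
      ≥ (μ {ω | ∃ i, t < V i ω}).toReal /
          (1 - ((k : ℝ) / n) * (μ {ω | ∃ i, τ 1 < V i ω}).toReal) :=
  stmt15_general μ n V hVmeas hVindep τ hτ t ht k hkn
end
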